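/- arXiv:1508.07021 — 5 statements merged into one kernel-verified Lean document; each statement's English description precedes it below -/
import Mathlib

section
/- For the generalized depolarizing Liouvillian L_σ with full-rank fixed point σ, the infimum over full-rank states ρ of D(σ‖ρ)/D(ρ‖σ) equals the infimum restricted to full-rank states ρ commuting with σ (where the quotient is extended continuously by value 1 at ρ = σ). -/
open Matrix MeasureTheory Filter
open scoped BigOperators ComplexOrder

noncomputable section

/-- Matrix logarithm of a Hermitian matrix via functional calculus (junk `0` otherwise). -/
def matLog {m : Type*} [Fintype m] [DecidableEq m] (A : Matrix m m ℂ) : Matrix m m ℂ :=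
  if h : A.IsHermitian then h.cfc Real.log else 0

/-- `ρ` is a quantum state (density matrix). -/
def IsState {m : Type*} [Fintype m] (ρ : Matrix m m ℂ) : Prop :=
  ρ.PosSemidef ∧ ρ.trace = 1

/-- `ρ` is a full-rank (positive definite) quantum state. -/
def IsFullRankState {m : Type*} [Fintype m] (ρ : Matrix m m ℂ) : Prop :=
  ρ.PosDef ∧ ρ.trace = 1

/-- Quantum relative entropy `D(ρ‖σ) = tr[ρ (log ρ - log σ)]`. -/
def relEnt {m : Type*} [Fintype m] [DecidableEq m] (ρ σ : Matrix m m ℂ) : ℝ :=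
  ((ρ * (matLog ρ - matLog σ)).trace).re

/-- von-Neumann entropy `S(ρ) = -tr[ρ log ρ]`. -/
def vnEntropy {m : Type*} [Fintype m] [DecidableEq m] (ρ : Matrix m m ℂ) : ℝ :=
  -((ρ * matLog ρ).trace).re

/-- eigenvalues of a matrix (junk `0` if not Hermitian). -/
def eigs {m : Type*} [Fintype m] [DecidableEq m] (A : Matrix m m ℂ) : m → ℝ :=
  if h : A.IsHermitian then h.eigenvalues else 0

/-- trace norm of a Hermitian matrix: sum of absolute values of eigenvalues. -/
def traceNorm {m : Type*} [Fintype m] [DecidableEq m] (A : Matrix m m ℂ) : ℝ :=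
  ∑ i, |eigs A i|

/-- smallest eigenvalue. -/
def smin {m : Type*} [Fintype m] [DecidableEq m] (A : Matrix m m ℂ) : ℝ := ⨅ i, eigs A i

/-- largest eigenvalue. -/
def smax {m : Type*} [Fintype m] [DecidableEq m] (A : Matrix m m ℂ) : ℝ := ⨆ i, eigs A i

/-- binary relative entropy. -/
def D2 (x y : ℝ) : ℝ := x * Real.log (x / y) + (1 - x) * Real.log ((1 - x) / (1 - y))

/-- continuous extension of `x ↦ D2 y x / D2 x y`, with value `1` at `x = y`. -/
def qfun (y x : ℝ) : ℝ := if x = y then 1 else D2 y x / D2 x y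

/-- `Q_σ(ρ)`: continuous extension of `D(σ‖ρ)/D(ρ‖σ)`, equal to `1` at `ρ = σ`. -/
def Qs {m : Type*} [Fintype m] [DecidableEq m] (σ ρ : Matrix m m ℂ) : ℝ :=
  if ρ = σ then 1 else relEnt σ ρ / relEnt ρ σ

end

/-!
Diagonalise `ρ = U diag(p) U*` and `σ = V diag(q) V*`. Then `D(ρ‖σ)` and `D(σ‖ρ)` are both sums
`∑ᵢⱼ Cᵢⱼ (…)` against the same unistochastic, hence doubly stochastic, matrix `Cᵢⱼ = |(U*V)ᵢⱼ|²`,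
so for a constant `c` the quantity `D(σ‖ρ) - c D(ρ‖σ)` is linear in `C`. By Birkhoff's theorem it
is nonnegative as soon as it is nonnegative at every permutation matrix `π`, where it equals
`D(σ‖τ) - c D(τ‖σ)` for `τ = V diag(p ∘ π⁻¹) V*`, a state commuting with `σ`. Hence every lower
bound of `Q_σ` on the states commuting with `σ` bounds `Q_σ` on all full-rank states. Klein's
inequality `D(ρ‖σ) > 0` for `ρ ≠ σ`, read off the same formula, lets one pass between
`c ≤ Q_σ(ρ)` and `c D(ρ‖σ) ≤ D(σ‖ρ)`.
-/

namespace QuantumRelEnt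

variable {n : Type*} [Fintype n] [DecidableEq n]

def diagonalOfReal (r : n → ℝ) : Matrix n n ℂ := diagonal fun i => (r i : ℂ)

lemma diagonalOfReal_mul_eq_mul_diagonalOfReal_iff {a b : n → ℝ} {W : Matrix n n ℂ} :
    diagonalOfReal a * W = W * diagonalOfReal b ↔ ∀ i j, W i j ≠ 0 → a i = b j := by
  simp only [← Matrix.ext_iff, diagonalOfReal, diagonal_mul, mul_diagonal, mul_comm _ (W _ _),
    mul_eq_mul_left_iff, Complex.ofReal_inj]
  exact forall₂_congr fun i j => or_iff_not_imp_right

lemma conj_diagonalOfReal_eq_iff {U V : Matrix n n ℂ} (hU : U ∈ unitaryGroup n ℂ)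
    (hV : V ∈ unitaryGroup n ℂ) {p q : n → ℝ} :
    U * diagonalOfReal p * star U = V * diagonalOfReal q * star V ↔
      ∀ i j, (star U * V) i j ≠ 0 → p i = q j := by
  rw [← diagonalOfReal_mul_eq_mul_diagonalOfReal_iff]
  have hU₁ := Unitary.star_mul_self_of_mem hU
  have hU₂ := Unitary.mul_star_self_of_mem hU
  have hV₁ := Unitary.star_mul_self_of_mem hV
  have hV₂ := Unitary.mul_star_self_of_mem hV
  constructor
  · intro h
    calc diagonalOfReal p * (star U * V)
        = star U * (U * diagonalOfReal p * star U) * V := by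
          simp only [← mul_assoc, hU₁, one_mul]
      _ = star U * V * diagonalOfReal q := by
          rw [h]; simp only [mul_assoc, hV₁, mul_one]
  · intro h
    calc U * diagonalOfReal p * star U
        = U * (diagonalOfReal p * (star U * V)) * star V := by
          simp only [mul_assoc, hV₂, mul_one]
      _ = V * diagonalOfReal q * star V := by
          rw [h]; simp only [← mul_assoc, hU₂, one_mul]

lemma isHermitian_conj_diagonalOfReal (U : Matrix n n ℂ) (r : n → ℝ) :
    (U * diagonalOfReal r * star U).IsHermitian :=
  isHermitian_mul_mul_conjTranspose U <|
    isHermitian_diagonal_of_self_adjoint _ <| by ext; simp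

lemma cfc_conj_diagonalOfReal {U : Matrix n n ℂ} (hU : U ∈ unitaryGroup n ℂ) {r : n → ℝ}
    (hA : (U * diagonalOfReal r * star U).IsHermitian) (f : ℝ → ℝ) :
    hA.cfc f = U * diagonalOfReal (f ∘ r) * star U := by
  let E : Matrix n n ℂ := hA.eigenvectorUnitary
  have hspec : E * diagonalOfReal hA.eigenvalues * star E = U * diagonalOfReal r * star U :=
    hA.spectral_theorem.symm
  change E * diagonalOfReal (f ∘ hA.eigenvalues) * star E = _
  rw [conj_diagonalOfReal_eq_iff (SetLike.coe_mem _) hU] at hspec ⊢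
  exact fun i j hij => congrArg f (hspec i j hij)

lemma matLog_conj_diagonalOfReal {U : Matrix n n ℂ} (hU : U ∈ unitaryGroup n ℂ) (r : n → ℝ) :
    matLog (U * diagonalOfReal r * star U) = U * diagonalOfReal (Real.log ∘ r) * star U := by
  rw [matLog, dif_pos (isHermitian_conj_diagonalOfReal U r), cfc_conj_diagonalOfReal hU]

def unistochastic (W : Matrix n n ℂ) : Matrix n n ℝ := of fun i j => Complex.normSq (W i j)

omit [Fintype n] [DecidableEq n] in
@[simp]
lemma unistochastic_apply (W : Matrix n n ℂ) (i j : n) :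
    unistochastic W i j = Complex.normSq (W i j) :=
  rfl

omit [Fintype n] in
lemma unistochastic_one : unistochastic (1 : Matrix n n ℂ) = 1 := by
  ext i j
  by_cases h : i = j <;> simp [one_apply, h]

omit [Fintype n] [DecidableEq n] in
lemma unistochastic_star (W : Matrix n n ℂ) : unistochastic (star W) = (unistochastic W)ᵀ := by
  ext i j
  simp [star_apply]

lemma unistochastic_mem_doublyStochastic {W : Matrix n n ℂ} (hW : W ∈ unitaryGroup n ℂ) :
    unistochastic W ∈ doublyStochastic ℝ n := by
  refine mem_doublyStochastic_iff_sum.2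
    ⟨fun i j => Complex.normSq_nonneg _, fun i => ?_, fun j => ?_⟩
  · have hrow : (W * star W) i i = 1 := by rw [Unitary.mul_star_self_of_mem hW, one_apply_eq]
    simp only [mul_apply, star_apply, Complex.star_def, Complex.mul_conj] at hrow
    exact_mod_cast hrow
  · have hcol : (star W * W) j j = 1 := by rw [Unitary.star_mul_self_of_mem hW, one_apply_eq]
    simp only [mul_apply, star_apply, Complex.star_def, mul_comm (starRingEnd ℂ _),
      Complex.mul_conj] at hcol
    exact_mod_cast hcol

lemma unistochastic_star_mul_mem_doublyStochastic {U V : Matrix n n ℂ}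
    (hU : U ∈ unitaryGroup n ℂ) (hV : V ∈ unitaryGroup n ℂ) :
    unistochastic (star U * V) ∈ doublyStochastic ℝ n :=
  unistochastic_mem_doublyStochastic (mul_mem (Unitary.star_mem hU) hV)

lemma trace_diagonalOfReal_mul_conj (W : Matrix n n ℂ) (p s : n → ℝ) :
    (diagonalOfReal p * (W * diagonalOfReal s * star W)).trace
      = ((∑ i, ∑ j, unistochastic W i j * (p i * s j) : ℝ) : ℂ) := by
  simp only [trace, diag, diagonalOfReal, diagonal_mul]
  simp only [mul_apply, diagonal_apply, mul_ite, mul_zero, Finset.sum_ite_eq', Finset.mem_univ,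
    if_true, star_apply, Finset.mul_sum, Complex.star_def]
  push_cast
  refine Finset.sum_congr rfl fun i _ => Finset.sum_congr rfl fun j _ => ?_
  rw [unistochastic_apply, Complex.normSq_eq_conj_mul_self]
  ring

lemma trace_conj_diagonalOfReal_mul (U V : Matrix n n ℂ) (p s : n → ℝ) :
    (U * diagonalOfReal p * star U * (V * diagonalOfReal s * star V)).trace
      = ((∑ i, ∑ j, unistochastic (star U * V) i j * (p i * s j) : ℝ) : ℂ) := by
  rw [← trace_diagonalOfReal_mul_conj, star_mul, star_star]
  simp only [mul_assoc]
  rw [trace_mul_comm U]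
  simp only [mul_assoc]

lemma relEnt_conj_diagonalOfReal {U V : Matrix n n ℂ} (hU : U ∈ unitaryGroup n ℂ)
    (hV : V ∈ unitaryGroup n ℂ) (p q : n → ℝ) :
    relEnt (U * diagonalOfReal p * star U) (V * diagonalOfReal q * star V)
      = ∑ i, ∑ j, unistochastic (star U * V) i j * (p i * (Real.log (p i) - Real.log (q j))) := by
  have hrow := sum_row_of_mem_doublyStochastic (unistochastic_star_mul_mem_doublyStochastic hU hV)
  rw [relEnt, matLog_conj_diagonalOfReal hU, matLog_conj_diagonalOfReal hV, mul_sub, trace_sub,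
    trace_conj_diagonalOfReal_mul, trace_conj_diagonalOfReal_mul, Unitary.star_mul_self_of_mem hU,
    unistochastic_one, ← Complex.ofReal_sub, Complex.ofReal_re]
  simp only [one_apply, ite_mul, one_mul, zero_mul, Finset.sum_ite_eq, Finset.mem_univ, if_true,
    Function.comp_apply, mul_sub, Finset.sum_sub_distrib]
  congr 1
  refine Finset.sum_congr rfl fun i _ => ?_
  rw [← Finset.sum_mul, hrow i, one_mul]

lemma relEnt_conj_diagonalOfReal_same {V : Matrix n n ℂ} (hV : V ∈ unitaryGroup n ℂ)
    (r q : n → ℝ) :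
    relEnt (V * diagonalOfReal r * star V) (V * diagonalOfReal q * star V)
      = ∑ i, r i * (Real.log (r i) - Real.log (q i)) := by
  rw [relEnt_conj_diagonalOfReal hV hV, Unitary.star_mul_self_of_mem hV, unistochastic_one]
  simp only [one_apply, ite_mul, one_mul, zero_mul, Finset.sum_ite_eq, Finset.mem_univ, if_true]

lemma sub_le_mul_log_sub_log {p q : ℝ} (hp : 0 < p) (hq : 0 < q) :
    p - q ≤ p * (Real.log p - Real.log q) := by
  have h := mul_le_mul_of_nonneg_left (Real.log_le_sub_one_of_pos (div_pos hq hp)) hp.le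
  rw [Real.log_div hq.ne' hp.ne', mul_sub_one, mul_div_cancel₀ _ hp.ne'] at h
  linarith

lemma sub_lt_mul_log_sub_log {p q : ℝ} (hp : 0 < p) (hq : 0 < q) (hpq : p ≠ q) :
    p - q < p * (Real.log p - Real.log q) := by
  have hqp : q / p ≠ 1 := by rwa [ne_eq, div_eq_one_iff_eq hp.ne', eq_comm]
  have h := mul_lt_mul_of_pos_left (Real.log_lt_sub_one_of_pos (div_pos hq hp) hqp) hp
  rw [Real.log_div hq.ne' hp.ne', mul_sub_one, mul_div_cancel₀ _ hp.ne'] at h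
  linarith

section DoublyStochastic

variable {C : Matrix n n ℝ} (hC : C ∈ doublyStochastic ℝ n) {p q : n → ℝ}
include hC

lemma sum_doublyStochastic_mul_sub_eq_zero (hpq : ∑ i, p i = ∑ j, q j) :
    ∑ i, ∑ j, C i j * (p i - q j) = 0 := by
  simp only [mul_sub, Finset.sum_sub_distrib, ← Finset.sum_mul, sum_row_of_mem_doublyStochastic hC]
  rw [Finset.sum_comm]
  simp only [← Finset.sum_mul, sum_col_of_mem_doublyStochastic hC, one_mul, hpq, sub_self]

lemma sum_doublyStochastic_mul_log_nonneg (hp : ∀ i, 0 < p i) (hq : ∀ j, 0 < q j)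
    (hpq : ∑ i, p i = ∑ j, q j) :
    0 ≤ ∑ i, ∑ j, C i j * (p i * (Real.log (p i) - Real.log (q j))) := by
  rw [← sum_doublyStochastic_mul_sub_eq_zero hC hpq]
  gcongr with i _ j _
  · exact nonneg_of_mem_doublyStochastic hC
  · exact sub_le_mul_log_sub_log (hp i) (hq j)

lemma sum_doublyStochastic_mul_log_pos (hp : ∀ i, 0 < p i) (hq : ∀ j, 0 < q j)
    (hpq : ∑ i, p i = ∑ j, q j) (h : ∃ i j, C i j ≠ 0 ∧ p i ≠ q j) :
    0 < ∑ i, ∑ j, C i j * (p i * (Real.log (p i) - Real.log (q j))) := by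
  obtain ⟨i, j, hCij, hpqij⟩ := h
  have hle : ∀ i j, C i j * (p i - q j) ≤ C i j * (p i * (Real.log (p i) - Real.log (q j))) :=
    fun i j => mul_le_mul_of_nonneg_left (sub_le_mul_log_sub_log (hp i) (hq j))
      (nonneg_of_mem_doublyStochastic hC)
  rw [← sum_doublyStochastic_mul_sub_eq_zero hC hpq]
  refine Finset.sum_lt_sum (fun i _ => Finset.sum_le_sum fun j _ => hle i j)
    ⟨i, Finset.mem_univ i, Finset.sum_lt_sum (fun j _ => hle i j) ⟨j, Finset.mem_univ j, ?_⟩⟩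
  exact mul_lt_mul_of_pos_left (sub_lt_mul_log_sub_log (hp i) (hq j) hpqij)
    ((nonneg_of_mem_doublyStochastic hC).lt_of_ne' hCij)

lemma sum_doublyStochastic_mul_nonneg_of_forall_perm {F : n → n → ℝ}
    (hF : ∀ e : Equiv.Perm n, 0 ≤ ∑ i, F i (e i)) :
    0 ≤ ∑ i, ∑ j, C i j * F i j := by
  obtain ⟨w, hw, -, hwC⟩ := exists_eq_sum_perm_of_mem_doublyStochastic hC
  have hCw : ∀ i j, C i j = ∑ e, w e * e.permMatrix ℝ i j := fun i j => by
    simp [← hwC, Matrix.sum_apply]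
  have hperm : ∀ e : Equiv.Perm n, ∑ i, ∑ j, e.permMatrix ℝ i j * F i j = ∑ i, F i (e i) := by
    intro e
    simp [Equiv.Perm.permMatrix, Equiv.toPEquiv_apply]
  calc 0 ≤ ∑ e, w e * ∑ i, F i (e i) := Finset.sum_nonneg fun e _ => mul_nonneg (hw e) (hF e)
    _ = ∑ i, ∑ j, C i j * F i j := by
      simp only [← hperm, hCw, Finset.mul_sum, Finset.sum_mul, mul_assoc]
      exact Finset.sum_comm.trans (Finset.sum_congr rfl fun _ _ => Finset.sum_comm)

end DoublyStochastic

lemma exists_eq_conj_diagonalOfReal_of_isFullRankState {ρ : Matrix n n ℂ} (hρ : IsFullRankState ρ) :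
    ∃ U ∈ unitaryGroup n ℂ, ∃ p : n → ℝ, (∀ i, 0 < p i) ∧ ∑ i, p i = 1 ∧
      ρ = U * diagonalOfReal p * star U := by
  have hA := hρ.1.isHermitian
  refine ⟨hA.eigenvectorUnitary, SetLike.coe_mem _, hA.eigenvalues, hρ.1.eigenvalues_pos, ?_,
    hA.spectral_theorem⟩
  have htrace := hA.trace_eq_sum_eigenvalues
  rw [hρ.2] at htrace
  have hsum : ((∑ i, hA.eigenvalues i : ℝ) : ℂ) = 1 := by simpa using htrace.symm
  exact_mod_cast hsum

lemma isFullRankState_conj_diagonalOfReal {U : Matrix n n ℂ} (hU : U ∈ unitaryGroup n ℂ)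
    {p : n → ℝ} (hp : ∀ i, 0 < p i) (hsum : ∑ i, p i = 1) :
    IsFullRankState (U * diagonalOfReal p * star U) := by
  refine ⟨(Unitary.isUnit_coe (U := ⟨U, hU⟩)).posDef_star_right_conjugate_iff.2
    (posDef_diagonal_iff.2 fun i => by exact_mod_cast hp i), ?_⟩
  rw [trace_mul_cycle, Unitary.star_mul_self_of_mem hU, one_mul, diagonalOfReal, trace_diagonal]
  exact_mod_cast hsum

lemma commute_conj_diagonalOfReal {U : Matrix n n ℂ} (hU : U ∈ unitaryGroup n ℂ) (a b : n → ℝ) :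
    Commute (U * diagonalOfReal a * star U) (U * diagonalOfReal b * star U) :=
  (commute_diagonal _ _).map (Unitary.conjStarAlgAut ℂ _ ⟨U, hU⟩)

@[simp]
lemma relEnt_self (ρ : Matrix n n ℂ) : relEnt ρ ρ = 0 := by
  simp [relEnt]

lemma relEnt_nonneg {ρ σ : Matrix n n ℂ} (hρ : IsFullRankState ρ) (hσ : IsFullRankState σ) :
    0 ≤ relEnt ρ σ := by
  obtain ⟨U, hU, p, hp, hps, rfl⟩ := exists_eq_conj_diagonalOfReal_of_isFullRankState hρ
  obtain ⟨V, hV, q, hq, hqs, rfl⟩ := exists_eq_conj_diagonalOfReal_of_isFullRankState hσ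
  rw [relEnt_conj_diagonalOfReal hU hV]
  exact sum_doublyStochastic_mul_log_nonneg (unistochastic_star_mul_mem_doublyStochastic hU hV)
    hp hq (hps.trans hqs.symm)

lemma relEnt_pos_of_ne {ρ σ : Matrix n n ℂ} (hρ : IsFullRankState ρ) (hσ : IsFullRankState σ)
    (hne : ρ ≠ σ) : 0 < relEnt ρ σ := by
  obtain ⟨U, hU, p, hp, hps, rfl⟩ := exists_eq_conj_diagonalOfReal_of_isFullRankState hρ
  obtain ⟨V, hV, q, hq, hqs, rfl⟩ := exists_eq_conj_diagonalOfReal_of_isFullRankState hσ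
  rw [relEnt_conj_diagonalOfReal hU hV]
  refine sum_doublyStochastic_mul_log_pos (unistochastic_star_mul_mem_doublyStochastic hU hV)
    hp hq (hps.trans hqs.symm) ?_
  contrapose! hne
  exact (conj_diagonalOfReal_eq_iff hU hV).2 fun i j hij => hne i j (by simpa using hij)

lemma Qs_nonneg {ρ σ : Matrix n n ℂ} (hρ : IsFullRankState ρ) (hσ : IsFullRankState σ) :
    0 ≤ Qs σ ρ := by
  unfold Qs
  split_ifs
  · exact zero_le_one
  · exact div_nonneg (relEnt_nonneg hσ hρ) (relEnt_nonneg hρ hσ)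

lemma le_Qs_iff {ρ σ : Matrix n n ℂ} (hρ : IsFullRankState ρ) (hσ : IsFullRankState σ)
    (hne : ρ ≠ σ) {c : ℝ} : c ≤ Qs σ ρ ↔ c * relEnt ρ σ ≤ relEnt σ ρ := by
  rw [Qs, if_neg hne, le_div_iff₀ (relEnt_pos_of_ne hρ hσ hne)]

lemma mul_relEnt_le_of_le_Qs {ρ σ : Matrix n n ℂ} (hρ : IsFullRankState ρ)
    (hσ : IsFullRankState σ) {c : ℝ} (h : c ≤ Qs σ ρ) : c * relEnt ρ σ ≤ relEnt σ ρ := by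
  by_cases hρσ : ρ = σ
  · simp [hρσ]
  · exact (le_Qs_iff hρ hσ hρσ).1 h

theorem mul_relEnt_le_of_forall_commute {σ : Matrix n n ℂ} (hσ : IsFullRankState σ) {c : ℝ}
    (hcomm : ∀ τ, IsFullRankState τ → τ * σ = σ * τ → c * relEnt τ σ ≤ relEnt σ τ)
    {ρ : Matrix n n ℂ} (hρ : IsFullRankState ρ) : c * relEnt ρ σ ≤ relEnt σ ρ := by
  obtain ⟨V, hV, q, -, -, rfl⟩ := exists_eq_conj_diagonalOfReal_of_isFullRankState hσ
  obtain ⟨U, hU, p, hp, hps, rfl⟩ := exists_eq_conj_diagonalOfReal_of_isFullRankState hρ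
  have hnum : relEnt (V * diagonalOfReal q * star V) (U * diagonalOfReal p * star U)
      = ∑ i, ∑ j, unistochastic (star U * V) i j * (q j * (Real.log (q j) - Real.log (p i))) := by
    rw [relEnt_conj_diagonalOfReal hV hU, show star V * U = star (star U * V) by simp [star_mul],
      unistochastic_star, Finset.sum_comm]
    rfl
  have hperm : ∀ e : Equiv.Perm n, 0 ≤ ∑ i, (q (e i) * (Real.log (q (e i)) - Real.log (p i))
      - c * (p i * (Real.log (p i) - Real.log (q (e i))))) := by
    intro e
    have hτ := isFullRankState_conj_diagonalOfReal hV (p := p ∘ e.symm) (fun j => hp _)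
      (by rw [← hps]; exact Equiv.sum_comp e.symm p)
    have h := hcomm _ hτ (commute_conj_diagonalOfReal hV _ _).eq
    rw [relEnt_conj_diagonalOfReal_same hV, relEnt_conj_diagonalOfReal_same hV] at h
    calc 0 ≤ ∑ j, (q j * (Real.log (q j) - Real.log (p (e.symm j)))
          - c * (p (e.symm j) * (Real.log (p (e.symm j)) - Real.log (q j)))) := by
          rw [Finset.sum_sub_distrib, ← Finset.mul_sum]
          exact sub_nonneg.2 h
      _ = _ := by
          rw [← Equiv.sum_comp e]
          simp only [Equiv.symm_apply_apply]
  have key := sum_doublyStochastic_mul_nonneg_of_forall_perm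
    (unistochastic_star_mul_mem_doublyStochastic hU hV)
    (F := fun i j => q j * (Real.log (q j) - Real.log (p i))
      - c * (p i * (Real.log (p i) - Real.log (q j)))) hperm
  rw [relEnt_conj_diagonalOfReal hU hV, hnum]
  simp only [mul_sub, Finset.sum_sub_distrib, mul_left_comm _ c, ← Finset.mul_sum] at key ⊢
  linarith

end QuantumRelEnt

/-- the infimum of `Q_σ` over full-rank states is attained among
states commuting with `σ`. -/
theorem stmt3 {d : ℕ} (σ : Matrix (Fin d) (Fin d) ℂ) (hσ : IsFullRankState σ) :
    (⨅ ρ : {ρ : Matrix (Fin d) (Fin d) ℂ // IsFullRankState ρ}, Qs σ ρ.1)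
      = ⨅ ρ : {ρ : Matrix (Fin d) (Fin d) ℂ // IsFullRankState ρ ∧ ρ * σ = σ * ρ},
          Qs σ ρ.1 := by
  have : Nonempty {ρ : Matrix (Fin d) (Fin d) ℂ // IsFullRankState ρ} := ⟨⟨σ, hσ⟩⟩
  have : Nonempty {ρ : Matrix (Fin d) (Fin d) ℂ // IsFullRankState ρ ∧ ρ * σ = σ * ρ} :=
    ⟨⟨σ, hσ, rfl⟩⟩
  have hbdd : BddBelow (Set.range fun ρ : {ρ : Matrix (Fin d) (Fin d) ℂ // IsFullRankState ρ} =>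
      Qs σ ρ.1) :=
    ⟨0, by rintro _ ⟨ρ, rfl⟩; exact QuantumRelEnt.Qs_nonneg ρ.2 hσ⟩
  have hbdd_comm : BddBelow (Set.range
      fun ρ : {ρ : Matrix (Fin d) (Fin d) ℂ // IsFullRankState ρ ∧ ρ * σ = σ * ρ} => Qs σ ρ.1) :=
    ⟨0, by rintro _ ⟨ρ, rfl⟩; exact QuantumRelEnt.Qs_nonneg ρ.2.1 hσ⟩
  have hle_comm : ∀ τ (hτ : IsFullRankState τ) (hτσ : τ * σ = σ * τ),
      (⨅ ρ : {ρ : Matrix (Fin d) (Fin d) ℂ // IsFullRankState ρ ∧ ρ * σ = σ * ρ}, Qs σ ρ.1)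
        ≤ Qs σ τ :=
    fun τ hτ hτσ => ciInf_le hbdd_comm ⟨τ, hτ, hτσ⟩
  refine le_antisymm (le_ciInf fun τ => ciInf_le hbdd ⟨τ.1, τ.2.1⟩) (le_ciInf fun ⟨ρ, hρ⟩ => ?_)
  by_cases hρσ : ρ = σ
  · exact hρσ ▸ hle_comm σ hσ rfl
  refine (QuantumRelEnt.le_Qs_iff hρ hσ hρσ).2 <|
    QuantumRelEnt.mul_relEnt_le_of_forall_commute hσ (fun τ hτ hτσ => ?_) hρ
  exact QuantumRelEnt.mul_relEnt_le_of_le_Qs hτ hσ (hle_comm τ hτ hτσ)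
end

section
/- For each fixed x ∈ (0,1), the function f_x: [0,1] → R given by f_x(y) = D_2(y‖x)/D_2(x‖y) for y ∉ {0, x, 1}, extended by f_x(x) = 1 and f_x(0) = f_x(1) = 0, is quasi-concave, i.e. unimodal: there exists m ∈ (0,1) such that f_x is monotonically increasing on [0,m) and monotonically decreasing on (m,1]. -/
open Matrix MeasureTheory Filter
open scoped BigOperators ComplexOrder

/-- `f_x(y)`: the quotient `D₂(y‖x)/D₂(x‖y)` extended by `f_x(x) = 1`,
`f_x(0) = f_x(1) = 0`. -/
noncomputable def fext (x y : ℝ) : ℝ :=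
  if y = 0 ∨ y = 1 then 0 else if y = x then 1 else D2 y x / D2 x y

/-!
For `t > 0` and `y ∉ {0, x, 1}` we have `t ≤ f_x(y)` iff `Φ_t(y) := D₂(y‖x) - t D₂(x‖y) ≥ 0`, so
quasi-concavity of `f_x` says that `{Φ_t ≥ 0}` is an interval, up to the point `x` itself, which
drops out of the superlevel set once `t > 1 = f_x(x)`. Now `Φ_t(x) = Φ_t'(x) = 0` and
`Φ_t''(y) = ψ_t(y) / (y (1 - y))²` with `ψ_t` a concave quadratic and `ψ_t(x) = (1 - t) x (1 - x)`;
so `Φ_t` is concave, convex, concave in turn. For `t ≤ 1` the point `x` lies in the convex part,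
where `Φ_t ≥ 0` by the tangent line at `x`, and concavity of the flanks keeps `{Φ_t ≥ 0}` an
interval. For `t > 1` the convex part lies on one side of `x`, with `Φ_t < 0` between `x` and it,
and the same argument applies on that side.

A quasi-concave function on `[0, 1]` is unimodal, and the mode lies in `(0, 1)` because
`f_x(x) = 1` while `f_x < 1` near both endpoints, where `D₂(x‖y) → ∞` and `D₂(y‖x)` stays bounded.
-/

open Real Set Filter Topology

section TangentLine

variable {f : ℝ → ℝ} {D : Set ℝ} {x y : ℝ}

theorem ConvexOn.le_of_hasDerivAt_eq_zero (hf : ConvexOn ℝ D f) (hx : x ∈ D) (hy : y ∈ D)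
    (hd : HasDerivAt f 0 x) : f x ≤ f y := by
  rcases lt_trichotomy x y with hxy | rfl | hxy
  · have := hf.le_slope_of_hasDerivAt hx hy hxy hd
    rw [slope_def_field, le_div_iff₀ (sub_pos.2 hxy)] at this
    linarith
  · exact le_rfl
  · have := hf.slope_le_of_hasDerivAt hy hx hxy hd
    rw [slope_def_field, div_le_iff₀ (sub_pos.2 hxy)] at this
    linarith

theorem StrictConcaveOn.lt_of_hasDerivAt_eq_zero (hf : StrictConcaveOn ℝ D f) (hx : x ∈ D)
    (hy : y ∈ D) (hyx : y ≠ x) (hd : HasDerivAt f 0 x) : f y < f x := by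
  rcases hyx.lt_or_gt with hyx | hxy
  · have := hf.lt_slope_of_hasDerivAt hy hx hyx hd
    rw [slope_def_field, lt_div_iff₀ (sub_pos.2 hyx)] at this
    linarith
  · have := hf.slope_lt_of_hasDerivAt hx hy hxy hd
    rw [slope_def_field, div_lt_iff₀ (sub_pos.2 hxy)] at this
    linarith

end TangentLine

theorem QuasiconcaveOn.exists_monotoneOn_antitoneOn {β : Type*} [LinearOrder β] {f : ℝ → β}
    {a b : ℝ} (hf : QuasiconcaveOn ℝ (Icc a b) f) (hab : a ≤ b) :
    ∃ m ∈ Icc a b, MonotoneOn f (Ico a m) ∧ AntitoneOn f (Ioc m b) := by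
  have hmin : ∀ ⦃p q r⦄, p ∈ Icc a b → r ∈ Icc a b → q ∈ Icc p r → min (f p) (f r) ≤ f q :=
    fun p q r hp hr hq => ((convex_iff_ordConnected.1 (hf (min (f p) (f r)))).out
      ⟨hp, min_le_left _ _⟩ ⟨hr, min_le_right _ _⟩ hq).2
  set S := {y ∈ Icc a b | MonotoneOn f (Icc a y)}
  have hS : a ∈ S := ⟨left_mem_Icc.2 hab, by simp⟩
  have hSb : BddAbove S := ⟨b, fun y hy => hy.1.2⟩
  refine ⟨sSup S, ⟨le_csSup hSb hS, csSup_le ⟨a, hS⟩ fun y hy => hy.1.2⟩, ?_, ?_⟩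
  · intro u hu v hv huv
    obtain ⟨y, hyS, hvy⟩ := exists_lt_of_lt_csSup ⟨a, hS⟩ hv.2
    exact hyS.2 ⟨hu.1, huv.trans hvy.le⟩ ⟨hv.1, hvy.le⟩ huv
  · intro u hu v hv huv
    have hua : a ≤ u := (le_csSup hSb hS).trans hu.1.le
    have huS : u ∉ S := fun h => (le_csSup hSb h).not_gt hu.1
    obtain ⟨p, hp, q, hq, hpq, hqp⟩ : ∃ p ∈ Icc a u, ∃ q ∈ Icc a u, p ≤ q ∧ f q < f p := by
      by_contra! h
      exact huS ⟨⟨hua, hu.2⟩, h⟩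
    have hvI : v ∈ Icc a b := ⟨hua.trans huv, hv.2⟩
    have hIcc : Icc a u ⊆ Icc a b := Icc_subset_Icc_right hu.2
    have hvq : f v ≤ f q := by
      have := hmin (hIcc hp) hvI ⟨hpq, hq.2.trans huv⟩
      exact (min_le_iff.1 this).resolve_left hqp.not_ge
    exact (min_le_iff.1 (hmin (hIcc hq) hvI ⟨hq.2, huv⟩)).elim hvq.trans id

section BinaryRelEntropy

variable {x y : ℝ}

theorem D2_one_sub_one_sub (x y : ℝ) : D2 (1 - x) (1 - y) = D2 x y := by
  simp only [D2, sub_sub_cancel]; ring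

theorem D2_self (x : ℝ) : D2 x x = 0 := by
  simp [D2]

theorem D2_pos (hx : x ∈ Ioo (0 : ℝ) 1) (hy : y ∈ Ioo (0 : ℝ) 1) (hxy : x ≠ y) : 0 < D2 x y := by
  obtain ⟨hx0, hx1⟩ := hx
  obtain ⟨hy0, hy1⟩ := hy
  have h1 : log (y / x) < y / x - 1 :=
    log_lt_sub_one_of_pos (by positivity) (div_ne_one_of_ne hxy.symm)
  have h2 : log ((1 - y) / (1 - x)) ≤ (1 - y) / (1 - x) - 1 :=
    log_le_sub_one_of_pos (div_pos (by linarith) (by linarith))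
  have e1 : x * (y / x - 1) = y - x := by field_simp
  have e2 : (1 - x) * ((1 - y) / (1 - x) - 1) = x - y := by
    field_simp [(by linarith : 1 - x ≠ 0)]
    ring
  rw [D2, ← inv_div y x, ← inv_div (1 - y), log_inv, log_inv]
  nlinarith [mul_lt_mul_of_pos_left h1 hx0, mul_le_mul_of_nonneg_left h2 (by linarith : 0 ≤ 1 - x)]

end BinaryRelEntropy

noncomputable section LevelGap

-- `levelGap x t`, `levelGapDeriv x t`, `levelGapCurv x t` are `Φ_t`, `Φ_t'`, `ψ_t` of the header.
def levelGap (x t y : ℝ) : ℝ := D2 y x - t * D2 x y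

def levelGapDeriv (x t y : ℝ) : ℝ :=
  log (y / x) - log ((1 - y) / (1 - x)) - t * ((1 - x) / (1 - y) - x / y)

def levelGapCurv (x t y : ℝ) : ℝ := y * (1 - y) - t * x * (1 - y) ^ 2 - t * (1 - x) * y ^ 2

variable {x y t : ℝ}

theorem levelGap_self (x t : ℝ) : levelGap x t x = 0 := by
  simp [levelGap, D2_self]

theorem levelGap_one_sub_one_sub (x t y : ℝ) : levelGap (1 - x) t (1 - y) = levelGap x t y := by
  simp only [levelGap, D2_one_sub_one_sub]

theorem levelGapCurv_self (x t : ℝ) : levelGapCurv x t x = (1 - t) * (x * (1 - x)) := by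
  rw [levelGapCurv]; ring

theorem hasDerivAt_levelGap (hx : x ∈ Ioo (0 : ℝ) 1) (hy : y ∈ Ioo (0 : ℝ) 1) :
    HasDerivAt (levelGap x t) (levelGapDeriv x t y) y := by
  obtain ⟨hx0, hx1⟩ := hx
  obtain ⟨hy0, hy1⟩ := hy
  have h1x : 1 - x ≠ 0 := by linarith
  have h1y : 1 - y ≠ 0 := by linarith
  have hid := hasDerivAt_id' y
  have hsub := hid.const_sub 1
  have hfst := (hid.mul ((hid.div_const x).log (by positivity))).add
    (hsub.mul ((hsub.div_const (1 - x)).log (div_ne_zero h1y h1x)))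
  have hsnd :=
    ((((hasDerivAt_const y x).div hid hy0.ne').log (div_ne_zero hx0.ne' hy0.ne')).const_mul x).add
    ((((hasDerivAt_const y (1 - x)).div hsub h1y).log (div_ne_zero h1x h1y)).const_mul (1 - x))
  refine (hfst.sub (hsnd.const_mul t)).congr_deriv ?_
  simp only [levelGapDeriv, Pi.div_apply]
  field_simp
  ring

theorem hasDerivAt_levelGapDeriv (hx : x ∈ Ioo (0 : ℝ) 1) (hy : y ∈ Ioo (0 : ℝ) 1) :
    HasDerivAt (levelGapDeriv x t) (levelGapCurv x t y / (y * (1 - y)) ^ 2) y := by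
  obtain ⟨hx0, hx1⟩ := hx
  obtain ⟨hy0, hy1⟩ := hy
  have h1x : 1 - x ≠ 0 := by linarith
  have h1y : 1 - y ≠ 0 := by linarith
  have hid := hasDerivAt_id' y
  have hsub := hid.const_sub 1
  have h := (((hid.div_const x).log (by positivity)).sub
    ((hsub.div_const (1 - x)).log (div_ne_zero h1y h1x))).sub
    ((((hasDerivAt_const y (1 - x)).div hsub h1y).sub
      ((hasDerivAt_const y x).div hid hy0.ne')).const_mul t)
  refine h.congr_deriv ?_
  simp only [levelGapCurv]
  field_simp
  ring

theorem levelGapDeriv_self (hx : x ∈ Ioo (0 : ℝ) 1) : levelGapDeriv x t x = 0 := by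
  have h1x : 1 - x ≠ 0 := by linarith [hx.2]
  simp [levelGapDeriv, div_self hx.1.ne', div_self h1x]

theorem hasDerivAt_levelGap_self (hx : x ∈ Ioo (0 : ℝ) 1) : HasDerivAt (levelGap x t) 0 x :=
  levelGapDeriv_self hx ▸ hasDerivAt_levelGap hx hx

theorem continuousOn_levelGap (hx : x ∈ Ioo (0 : ℝ) 1) {D : Set ℝ} (hD : D ⊆ Ioo 0 1) :
    ContinuousOn (levelGap x t) D :=
  fun _ hz => (hasDerivAt_levelGap hx (hD hz)).continuousAt.continuousWithinAt

variable {u v : ℝ}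

theorem convexOn_levelGap (hx : x ∈ Ioo (0 : ℝ) 1) (huv : Icc u v ⊆ Ioo 0 1)
    (h : ∀ z ∈ Ioo u v, 0 ≤ levelGapCurv x t z) : ConvexOn ℝ (Icc u v) (levelGap x t) := by
  refine convexOn_of_hasDerivWithinAt2_nonneg (convex_Icc u v) (continuousOn_levelGap hx huv)
    (fun z hz => (hasDerivAt_levelGap hx (huv (interior_subset hz))).hasDerivWithinAt)
    (fun z hz => (hasDerivAt_levelGapDeriv hx (huv (interior_subset hz))).hasDerivWithinAt)
    fun z hz => div_nonneg (h z ?_) (sq_nonneg _)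
  rwa [interior_Icc] at hz

theorem concaveOn_levelGap (hx : x ∈ Ioo (0 : ℝ) 1) (huv : Icc u v ⊆ Ioo 0 1)
    (h : ∀ z ∈ Ioo u v, levelGapCurv x t z ≤ 0) : ConcaveOn ℝ (Icc u v) (levelGap x t) := by
  refine concaveOn_of_hasDerivWithinAt2_nonpos (convex_Icc u v) (continuousOn_levelGap hx huv)
    (fun z hz => (hasDerivAt_levelGap hx (huv (interior_subset hz))).hasDerivWithinAt)
    (fun z hz => (hasDerivAt_levelGapDeriv hx (huv (interior_subset hz))).hasDerivWithinAt)
    fun z hz => div_nonpos_of_nonpos_of_nonneg (h z ?_) (sq_nonneg _)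
  rwa [interior_Icc] at hz

theorem strictConcaveOn_levelGap (hx : x ∈ Ioo (0 : ℝ) 1) (huv : Icc u v ⊆ Ioo 0 1)
    (h : ∀ z ∈ Ioo u v, levelGapCurv x t z < 0) : StrictConcaveOn ℝ (Icc u v) (levelGap x t) := by
  refine strictConcaveOn_of_deriv2_neg (convex_Icc u v) (continuousOn_levelGap hx huv) ?_
  rw [interior_Icc]
  intro z hz
  have hz01 := huv (Ioo_subset_Icc_self hz)
  have hderiv : deriv (levelGap x t) =ᶠ[𝓝 z] levelGapDeriv x t := by
    filter_upwards [Ioo_mem_nhds hz01.1 hz01.2] with w hw using (hasDerivAt_levelGap hx hw).deriv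
  rw [Function.iterate_succ_apply, Function.iterate_one, hderiv.deriv_eq,
    (hasDerivAt_levelGapDeriv hx hz01).deriv]
  exact div_neg_of_neg_of_pos (h z hz) (pow_pos (mul_pos hz01.1 (sub_pos.2 hz01.2)) 2)

end LevelGap

section LevelGapSign

variable {x y t a b c : ℝ}

theorem exists_levelGapCurv_nonneg_iff (ht : 0 < 1 + t) {z₀ : ℝ} (hz₀ : 0 ≤ levelGapCurv x t z₀) :
    ∃ r s : ℝ, ∀ z, 0 ≤ levelGapCurv x t z ↔ z ∈ Icc r s := by
  set Δ := (1 + 2 * t * x) ^ 2 - 4 * (1 + t) * (t * x)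
  have hΔ : 0 ≤ Δ := by
    rw [levelGapCurv] at hz₀
    nlinarith [sq_nonneg (2 * (1 + t) * z₀ - (1 + 2 * t * x))]
  have hsq := mul_self_sqrt hΔ
  refine ⟨(1 + 2 * t * x - √Δ) / (2 * (1 + t)), (1 + 2 * t * x + √Δ) / (2 * (1 + t)), fun z => ?_⟩
  set r := (1 + 2 * t * x - √Δ) / (2 * (1 + t))
  set s := (1 + 2 * t * x + √Δ) / (2 * (1 + t))
  have hrs : r ≤ s := div_le_div_of_nonneg_right (by linarith [sqrt_nonneg Δ]) (by linarith)
  have hfactor : levelGapCurv x t z = (1 + t) * ((z - r) * (s - z)) := by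
    simp only [levelGapCurv, r, s]
    field_simp
    linear_combination (-1 : ℝ) * hsq
  rw [hfactor, mul_nonneg_iff_of_pos_left ht, mul_nonneg_iff, mem_Icc]
  constructor
  · rintro (⟨h1, h2⟩ | ⟨h1, h2⟩) <;> constructor <;> linarith
  · rintro ⟨h1, h2⟩
    exact Or.inl ⟨sub_nonneg.2 h1, sub_nonneg.2 h2⟩

theorem levelGap_nonneg_of_levelGapCurv_nonneg (hx : x ∈ Ioo (0 : ℝ) 1) (hy : y ∈ Ioo (0 : ℝ) 1)
    (h : ∀ z ∈ uIoo x y, 0 ≤ levelGapCurv x t z) : 0 ≤ levelGap x t y := by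
  have hconv := convexOn_levelGap hx (ordConnected_Ioo.uIcc_subset hx hy) h
  simpa only [levelGap_self] using
    hconv.le_of_hasDerivAt_eq_zero left_mem_uIcc right_mem_uIcc (hasDerivAt_levelGap_self hx)

theorem levelGap_neg_of_levelGapCurv_neg (hx : x ∈ Ioo (0 : ℝ) 1) (hy : y ∈ Ioo (0 : ℝ) 1)
    (hyx : y ≠ x) (h : ∀ z ∈ uIoo x y, levelGapCurv x t z < 0) : levelGap x t y < 0 := by
  have hconc := strictConcaveOn_levelGap hx (ordConnected_Ioo.uIcc_subset hx hy) h
  simpa only [levelGap_self] using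
    hconc.lt_of_hasDerivAt_eq_zero left_mem_uIcc right_mem_uIcc hyx (hasDerivAt_levelGap_self hx)

theorem exists_levelGapCurv_nonneg_of_levelGap_nonneg (hx : x ∈ Ioo (0 : ℝ) 1)
    (hy : y ∈ Ioo (0 : ℝ) 1) (hyx : y ≠ x) (h : 0 ≤ levelGap x t y) :
    ∃ z ∈ uIoo x y, 0 ≤ levelGapCurv x t z := by
  by_contra! hneg
  exact (levelGap_neg_of_levelGapCurv_neg hx hy hyx hneg).not_ge h

/- If `r ≤ x`, the tangent line of the convex part at `x` bounds `levelGap x t` below by `0`;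
if `x < r`, strict concavity on `[x, r]` makes `levelGap x t r < 0`, and convexity on `[r, y]`
carries the sign of `levelGap x t a` on to `y`. -/
theorem levelGap_nonneg_of_le_of_le {r s y : ℝ} (hx : x ∈ Ioo (0 : ℝ) 1)
    (hrs : ∀ z, 0 ≤ levelGapCurv x t z ↔ z ∈ Icc r s) (hxa : x ≤ a) (hra : r ≤ a)
    (hPa : 0 ≤ levelGap x t a) (hay : a ≤ y) (hys : y ≤ s) (hy : y < 1) : 0 ≤ levelGap x t y := by
  have hmem : ∀ z, x ≤ z → z ≤ y → z ∈ Ioo (0 : ℝ) 1 :=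
    fun z h1 h2 => ⟨hx.1.trans_le h1, h2.trans_lt hy⟩
  rcases le_or_gt r x with hrx | hxr
  · refine levelGap_nonneg_of_levelGapCurv_nonneg hx (hmem y (hxa.trans hay) le_rfl)
      fun z hz => ?_
    rw [uIoo_of_le (hxa.trans hay)] at hz
    exact (hrs z).2 ⟨hrx.trans hz.1.le, hz.2.le.trans hys⟩
  have hr : levelGap x t r < 0 := by
    refine levelGap_neg_of_levelGapCurv_neg hx (hmem r hxr.le (hra.trans hay)) hxr.ne'
      fun z hz => ?_
    rw [uIoo_of_lt hxr] at hz
    exact lt_of_not_ge fun h => ((hrs z).1 h).1.not_gt hz.2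
  have hra' : r < a := hra.lt_of_ne (by rintro rfl; linarith)
  have hconv := convexOn_levelGap hx (Icc_subset_Ioo (hx.1.trans hxr) hy)
    fun z hz => (hrs z).2 ⟨hz.1.le, hz.2.le.trans hys⟩
  exact hPa.trans (hconv.le_right_of_left_le'' (left_mem_Icc.2 (hra.trans hay))
    (right_mem_Icc.2 (hra.trans hay)) hra' hay (hr.le.trans hPa))

theorem levelGap_nonneg_of_le_of_lt_of_lt (hx : x ∈ Ioo (0 : ℝ) 1) (ht : 0 < t) (hxa : x ≤ a)
    (hab : a < b) (hbc : b < c) (hc : c < 1) (hside : t ≤ 1 ∨ x < a)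
    (hPa : 0 ≤ levelGap x t a) (hPc : 0 ≤ levelGap x t c) : 0 ≤ levelGap x t b := by
  obtain ⟨z₀, hz₀, hψz₀⟩ : ∃ z ∈ Icc x a, 0 ≤ levelGapCurv x t z := by
    rcases hside with ht1 | hxa'
    · refine ⟨x, left_mem_Icc.2 hxa, ?_⟩
      rw [levelGapCurv_self]
      exact mul_nonneg (by linarith) (mul_pos hx.1 (sub_pos.2 hx.2)).le
    · obtain ⟨z, hz, hψ⟩ := exists_levelGapCurv_nonneg_of_levelGap_nonneg hx
        ⟨hx.1.trans hxa', (hab.trans hbc).trans hc⟩ hxa'.ne' hPa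
      rw [uIoo_of_lt hxa'] at hz
      exact ⟨z, Ioo_subset_Icc_self hz, hψ⟩
  obtain ⟨r, s, hrs⟩ := exists_levelGapCurv_nonneg_iff (by linarith) hψz₀
  have hra : r ≤ a := ((hrs z₀).1 hψz₀).1.trans hz₀.2
  rcases le_or_gt b s with hbs | hsb
  · exact levelGap_nonneg_of_le_of_le hx hrs hxa hra hPa hab.le hbs (hbc.trans hc)
  have hw : 0 ≤ levelGap x t (max a s) := by
    rcases le_total a s with has | hsa
    · rw [max_eq_right has]
      exact levelGap_nonneg_of_le_of_le hx hrs hxa hra hPa has le_rfl (hsb.trans (hbc.trans hc))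
    · rwa [max_eq_left hsa]
  have hconc := concaveOn_levelGap hx
    (Icc_subset_Ioo (hx.1.trans_le (hxa.trans (le_max_left a s))) hc) fun z hz =>
      (lt_of_not_ge fun h => ((hrs z).1 h).2.not_gt ((le_max_right a s).trans_lt hz.1)).le
  have hwc : max a s ≤ c := max_le (hab.trans hbc).le (hsb.trans hbc).le
  exact (le_min hw hPc).trans (hconc.min_le_of_mem_Icc (left_mem_Icc.2 hwc)
    (right_mem_Icc.2 hwc) ⟨max_le hab.le hsb.le, hbc.le⟩)

theorem levelGap_nonneg_of_lt_of_lt_of_le (hx : x ∈ Ioo (0 : ℝ) 1) (ht : 0 < t) (ha : 0 < a)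
    (hab : a < b) (hbc : b < c) (hcx : c ≤ x) (hside : t ≤ 1 ∨ c < x)
    (hPa : 0 ≤ levelGap x t a) (hPc : 0 ≤ levelGap x t c) : 0 ≤ levelGap x t b := by
  rw [← levelGap_one_sub_one_sub] at hPa hPc ⊢
  exact levelGap_nonneg_of_le_of_lt_of_lt (x := 1 - x) ⟨by linarith [hx.2], by linarith [hx.1]⟩ ht
    (by linarith) (by linarith) (by linarith) (by linarith) (hside.imp_right (by intro; linarith))
    hPc hPa

theorem le_one_of_levelGap_nonneg (hx : x ∈ Ioo (0 : ℝ) 1) (ht : 0 < t) (ha : 0 < a)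
    (hax : a < x) (hxc : x < c) (hc : c < 1)
    (hPa : 0 ≤ levelGap x t a) (hPc : 0 ≤ levelGap x t c) : t ≤ 1 := by
  obtain ⟨za, hza, hψa⟩ := exists_levelGapCurv_nonneg_of_levelGap_nonneg hx
    ⟨ha, hax.trans hx.2⟩ hax.ne hPa
  obtain ⟨zc, hzc, hψc⟩ := exists_levelGapCurv_nonneg_of_levelGap_nonneg hx
    ⟨hx.1.trans hxc, hc⟩ hxc.ne' hPc
  rw [uIoo_of_gt hax] at hza
  rw [uIoo_of_lt hxc] at hzc
  obtain ⟨r, s, hrs⟩ := exists_levelGapCurv_nonneg_iff (by linarith) hψa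
  have hψx := (hrs x).2 ⟨((hrs za).1 hψa).1.trans hza.2.le, hzc.1.le.trans ((hrs zc).1 hψc).2⟩
  rw [levelGapCurv_self] at hψx
  linarith [nonneg_of_mul_nonneg_left hψx (mul_pos hx.1 (sub_pos.2 hx.2))]

theorem levelGap_nonneg_of_lt_of_lt (hx : x ∈ Ioo (0 : ℝ) 1) (ht : 0 < t) (ha : 0 < a)
    (hab : a < b) (hbc : b < c) (hc : c < 1) (hside : t ≤ 1 ∨ a ≠ x ∧ c ≠ x)
    (hPa : 0 ≤ levelGap x t a) (hPc : 0 ≤ levelGap x t c) : 0 ≤ levelGap x t b := by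
  rcases le_or_gt x a with hxa | hax
  · exact levelGap_nonneg_of_le_of_lt_of_lt hx ht hxa hab hbc hc
      (hside.imp_right fun h => hxa.lt_of_ne' h.1) hPa hPc
  rcases le_or_gt c x with hcx | hxc
  · exact levelGap_nonneg_of_lt_of_lt_of_le hx ht ha hab hbc hcx
      (hside.imp_right fun h => hcx.lt_of_ne h.2) hPa hPc
  have ht1 := le_one_of_levelGap_nonneg hx ht ha hax hxc hc hPa hPc
  rcases lt_trichotomy b x with hbx | rfl | hxb
  · exact levelGap_nonneg_of_lt_of_lt_of_le hx ht ha hab hbx le_rfl (.inl ht1) hPa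
      (levelGap_self x t).ge
  · exact (levelGap_self b t).ge
  · exact levelGap_nonneg_of_le_of_lt_of_lt hx ht le_rfl hxb hbc hc (.inl ht1)
      (levelGap_self x t).ge hPc

end LevelGapSign

section QuotientFunction

variable {x y t : ℝ}

theorem fext_of_mem_Ioo (hy : y ∈ Ioo (0 : ℝ) 1) (hyx : y ≠ x) : fext x y = D2 y x / D2 x y := by
  rw [fext, if_neg (by rintro (rfl | rfl) <;> simp at hy), if_neg hyx]

theorem fext_self (hx : x ∈ Ioo (0 : ℝ) 1) : fext x x = 1 := by
  rw [fext, if_neg (by rintro (rfl | rfl) <;> simp at hx), if_pos rfl]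

theorem fext_zero (x : ℝ) : fext x 0 = 0 := by simp [fext]

theorem fext_one (x : ℝ) : fext x 1 = 0 := by simp [fext]

theorem fext_one_sub_one_sub (x y : ℝ) : fext (1 - x) (1 - y) = fext x y := by
  simp only [fext, sub_eq_zero, sub_eq_self, sub_right_inj, D2_one_sub_one_sub,
    eq_comm (a := (1 : ℝ)), or_comm]

theorem fext_nonneg (hx : x ∈ Ioo (0 : ℝ) 1) (hy : y ∈ Icc (0 : ℝ) 1) : 0 ≤ fext x y := by
  rcases hy.1.eq_or_lt with rfl | hy0
  · rw [fext_zero]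
  rcases hy.2.eq_or_lt with rfl | hy1
  · rw [fext_one]
  rcases eq_or_ne y x with rfl | hyx
  · rw [fext_self hx]; exact zero_le_one
  rw [fext_of_mem_Ioo ⟨hy0, hy1⟩ hyx]
  exact div_nonneg (D2_pos ⟨hy0, hy1⟩ hx hyx).le (D2_pos hx ⟨hy0, hy1⟩ hyx.symm).le

theorem le_fext_iff (hx : x ∈ Ioo (0 : ℝ) 1) (hy : y ∈ Ioo (0 : ℝ) 1) (hyx : y ≠ x) :
    t ≤ fext x y ↔ 0 ≤ levelGap x t y := by
  rw [fext_of_mem_Ioo hy hyx, le_div_iff₀ (D2_pos hx hy hyx.symm), levelGap, sub_nonneg]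

theorem quasiconcaveOn_fext (hx : x ∈ Ioo (0 : ℝ) 1) : QuasiconcaveOn ℝ (Icc 0 1) (fext x) := by
  intro t
  refine convex_iff_ordConnected.2 ⟨fun a ⟨ha, hta⟩ c ⟨hc, htc⟩ b hb => ?_⟩
  refine ⟨⟨ha.1.trans hb.1, hb.2.trans hc.2⟩, ?_⟩
  rcases le_or_gt t 0 with ht | ht
  · exact ht.trans (fext_nonneg hx ⟨ha.1.trans hb.1, hb.2.trans hc.2⟩)
  rcases hb.1.eq_or_lt with rfl | hab
  · exact hta
  rcases hb.2.eq_or_lt with rfl | hbc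
  · exact htc
  have ha0 : 0 < a := ha.1.lt_of_ne (by rintro rfl; rw [fext_zero] at hta; linarith)
  have hc1 : c < 1 := hc.2.lt_of_ne (by rintro rfl; rw [fext_one] at htc; linarith)
  have hgap : ∀ y ∈ Ioo (0 : ℝ) 1, t ≤ fext x y → 0 ≤ levelGap x t y := by
    intro y hy h
    rcases eq_or_ne y x with rfl | hyx
    · exact (levelGap_self y t).ge
    · exact (le_fext_iff hx hy hyx).1 h
  have hPa := hgap a ⟨ha0, (hab.trans hbc).trans hc1⟩ hta
  have hPc := hgap c ⟨ha0.trans (hab.trans hbc), hc1⟩ htc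
  have hb01 : b ∈ Ioo (0 : ℝ) 1 := ⟨ha0.trans hab, hbc.trans hc1⟩
  rcases eq_or_ne b x with rfl | hbx
  · rw [fext_self hx]
    exact le_one_of_levelGap_nonneg hx ht ha0 hab hbc hc1 hPa hPc
  have hne : ∀ y, t ≤ fext x y → 1 < t → y ≠ x := by
    rintro y h ht1 rfl
    rw [fext_self hx] at h
    linarith
  rw [le_fext_iff hx hb01 hbx]
  exact levelGap_nonneg_of_lt_of_lt hx ht ha0 hab hbc hc1
    ((le_or_gt t 1).imp_right fun ht1 => ⟨hne a hta ht1, hne c htc ht1⟩) hPa hPc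

theorem D2_le_neg_log_sub_log (hx : x ∈ Ioo (0 : ℝ) 1) (hy : y ∈ Ioo (0 : ℝ) 1) :
    D2 y x ≤ -log x - log (1 - x) := by
  obtain ⟨hx0, hx1⟩ := hx
  obtain ⟨hy0, hy1⟩ := hy
  have hlx := log_neg hx0 hx1
  have hl1x := log_neg (sub_pos.2 hx1) (by linarith)
  have hly := log_neg hy0 hy1
  have hl1y := log_neg (sub_pos.2 hy1) (by linarith)
  rw [D2, log_div hy0.ne' hx0.ne', log_div (sub_pos.2 hy1).ne' (sub_pos.2 hx1).ne']
  nlinarith [mul_neg_of_pos_of_neg hy0 hly, mul_neg_of_pos_of_neg (sub_pos.2 hy1) hl1y,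
    mul_neg_of_pos_of_neg hy0 hl1x, mul_neg_of_pos_of_neg (sub_pos.2 hy1) hlx]

theorem tendsto_D2_nhdsLT_one (hx : x ∈ Ioo (0 : ℝ) 1) : Tendsto (D2 x) (𝓝[<] 1) atTop := by
  have h1x : 0 < 1 - x := sub_pos.2 hx.2
  have hfst : Tendsto (fun y => x * log (x / y)) (𝓝[<] 1) (𝓝 (x * log (x / 1))) :=
    ((continuousAt_const.mul ((continuousAt_const.div continuousAt_id one_ne_zero).log
      (by simpa using hx.1.ne'))).tendsto).mono_left nhdsWithin_le_nhds
  have hsub : Tendsto (fun y : ℝ => 1 - y) (𝓝[<] 1) (𝓝[>] 0) := by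
    refine tendsto_nhdsWithin_iff.2
      ⟨?_, eventually_nhdsWithin_of_forall fun _ hy => mem_Ioi.2 (sub_pos.2 hy)⟩
    simpa using ((continuous_sub_left (1 : ℝ)).tendsto 1).mono_left nhdsWithin_le_nhds
  have hsnd : Tendsto (fun y => (1 - x) * log ((1 - x) / (1 - y))) (𝓝[<] 1) atTop := by
    simp only [div_eq_mul_inv]
    exact (tendsto_log_atTop.comp
      (hsub.inv_tendsto_nhdsGT_zero.const_mul_atTop h1x)).const_mul_atTop h1x
  exact hfst.add_atTop hsnd

theorem exists_fext_lt_one_of_gt (hx : x ∈ Ioo (0 : ℝ) 1) : ∃ y ∈ Ioo x 1, fext x y < 1 := by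
  obtain ⟨y, hD, hy⟩ := (((tendsto_D2_nhdsLT_one hx).eventually_gt_atTop
    (-log x - log (1 - x))).and (Ioo_mem_nhdsLT hx.2)).exists
  have hy01 : y ∈ Ioo (0 : ℝ) 1 := ⟨hx.1.trans hy.1, hy.2⟩
  refine ⟨y, hy, ?_⟩
  rw [fext_of_mem_Ioo hy01 hy.1.ne', div_lt_one (D2_pos hx hy01 hy.1.ne)]
  linarith [D2_le_neg_log_sub_log hx hy01]

theorem exists_fext_lt_one_of_lt (hx : x ∈ Ioo (0 : ℝ) 1) : ∃ y ∈ Ioo 0 x, fext x y < 1 := by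
  obtain ⟨y, hy, h⟩ :=
    exists_fext_lt_one_of_gt (x := 1 - x) ⟨by linarith [hx.2], by linarith [hx.1]⟩
  refine ⟨1 - y, ⟨by linarith [hy.2], by linarith [hy.1]⟩, ?_⟩
  rwa [← fext_one_sub_one_sub, sub_sub_cancel]

end QuotientFunction

/-- for each `x ∈ (0,1)` the function `f_x` is unimodal
(hence quasi-concave): increasing on `[0,m)` and decreasing on `(m,1]` for some `m`. -/
theorem stmt6 (x : ℝ) (hx : x ∈ Set.Ioo (0 : ℝ) 1) :
    ∃ m ∈ Set.Ioo (0 : ℝ) 1,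
      MonotoneOn (fext x) (Set.Ico 0 m) ∧ AntitoneOn (fext x) (Set.Ioc m 1) := by
  obtain ⟨m, hm, hmono, hanti⟩ :=
    (quasiconcaveOn_fext hx).exists_monotoneOn_antitoneOn zero_le_one
  obtain ⟨y₀, hy₀, hfy₀⟩ := exists_fext_lt_one_of_lt hx
  obtain ⟨y₁, hy₁, hfy₁⟩ := exists_fext_lt_one_of_gt hx
  refine ⟨m, ⟨hm.1.lt_of_ne ?_, hm.2.lt_of_ne ?_⟩, hmono, hanti⟩
  · rintro rfl
    have := hanti ⟨hy₀.1, (hy₀.2.trans hx.2).le⟩ ⟨hx.1, hx.2.le⟩ hy₀.2.le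
    rw [fext_self hx] at this
    linarith
  · rintro rfl
    have := hmono ⟨hx.1.le, hx.2⟩ ⟨(hx.1.trans hy₁.1).le, hy₁.2⟩ hy₁.1.le
    rw [fext_self hx] at this
    linarith
end

section
/- For p ∈ [0, 1/2], the infimum over ε ∈ (0, 1−p] of D_2(p+ε‖p)/ε² equals φ(p) = (1/(1−2p)) log((1−p)/p) (with φ(1/2) = 2). -/
open Matrix MeasureTheory Filter
open scoped BigOperators ComplexOrder

/-- `φ(p) = log((1-p)/p)/(1-2p)`, extended by `φ(1/2) = 2`. -/
noncomputable def phi (p : ℝ) : ℝ :=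
  if p = 1 / 2 then 2 else (1 / (1 - 2 * p)) * Real.log ((1 - p) / p)

/-!
Put `c = φ(p)` and `ψ(x) = D₂(x‖p) - c (x - p)²`. Then `ψ(p) = ψ'(p) = 0`,
`ψ''(x) = 1/(x(1-x)) - 2c`, and `ψ(1 - x) = ψ(x)`, because `c (1 - 2p) = log((1-p)/p)` makes
`D₂(1-x‖p) - D₂(x‖p) = (1 - 2x) log((1-p)/p)` equal to `c ((1-x-p)² - (x-p)²)`.
On `[p, 1/2]` the derivative `ψ'` is concave and vanishes at both ends, so `ψ` increases from `0`;
by symmetry `ψ ≥ 0` on `[1/2, 1-p]`. On `[1-p, 1]` we have `ψ'' ≥ 0` since `2c p(1-p) ≤ 1`,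
which is `log u ≤ sinh (log u)` for `u = (1-p)/p`, so `ψ` increases from `ψ(1-p) = 0`.
Hence the ratio is at least `c`, with equality at `ε = 1 - 2p`; for `p = 1/2` the value `2` is
only reached in the limit `ε → 0`, via the third-order expansion of `log`. At `p = 0` both sides
are the junk value `0`: `log (ε/0) = 0`, and the ratio tends to `-∞`.
-/

open Real Set

lemma AntitoneOn.concaveOn_Icc_of_hasDerivAt {f f' : ℝ → ℝ} {a b : ℝ}
    (hf : ∀ x ∈ Icc a b, HasDerivAt f (f' x) x) (hf' : AntitoneOn f' (Icc a b)) :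
    ConcaveOn ℝ (Icc a b) f := by
  refine AntitoneOn.concaveOn_of_deriv (convex_Icc a b)
    (fun x hx => (hf x hx).continuousAt.continuousWithinAt)
    (fun x hx => (hf x (interior_subset hx)).differentiableAt.differentiableWithinAt) ?_
  intro x hx y hy hxy
  rw [(hf x (interior_subset hx)).deriv, (hf y (interior_subset hy)).deriv]
  exact hf' (interior_subset hx) (interior_subset hy) hxy

lemma monotoneOn_Icc_of_hasDerivAt_nonneg {f f' : ℝ → ℝ} {a b : ℝ}
    (hf : ContinuousOn f (Icc a b)) (hf' : ∀ x ∈ Ioo a b, HasDerivAt f (f' x) x)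
    (hf'₀ : ∀ x ∈ Ioo a b, 0 ≤ f' x) : MonotoneOn f (Icc a b) :=
  monotoneOn_of_hasDerivWithinAt_nonneg (convex_Icc a b) hf
    (fun x hx => (hf' x (by rwa [interior_Icc] at hx)).hasDerivWithinAt)
    (fun x hx => hf'₀ x (by rwa [interior_Icc] at hx))

lemma log_one_sub_le {y : ℝ} (hy : |y| ≤ 1 / 2) : log (1 - y) ≤ -y - y ^ 2 / 2 + 2 * |y| ^ 3 := by
  have h := abs_log_sub_add_sum_range_le (hy.trans_lt (by norm_num)) 2
  have h' : |y| ^ (2 + 1) / (1 - |y|) ≤ 2 * |y| ^ 3 := by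
    rw [div_le_iff₀ (by linarith), pow_succ _ 2]
    nlinarith [mul_nonneg (pow_nonneg (abs_nonneg y) 3) (by linarith : 0 ≤ 1 - 2 * |y|)]
  simp only [Finset.sum_range_succ, Finset.sum_range_zero] at h
  norm_num at h
  linarith [le_of_abs_le h, h']

lemma continuous_mul_log_div (q : ℝ) : Continuous fun y : ℝ => y * log (y / q) := by
  rcases eq_or_ne q 0 with rfl | hq
  · simpa using continuous_const (y := (0 : ℝ))
  · have h : (fun y : ℝ => y * log (y / q)) = fun y => q * (y / q * log (y / q)) := by
      funext y; field_simp
    rw [h]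
    exact continuous_const.mul (continuous_mul_log.comp (continuous_id.div_const q))

lemma hasDerivAt_mul_log_div {q y : ℝ} (hq : q ≠ 0) (hy : y ≠ 0) :
    HasDerivAt (fun y : ℝ => y * log (y / q)) (log (y / q) + 1) y := by
  refine ((hasDerivAt_id' y).mul (((hasDerivAt_id' y).div_const q).log
    (div_ne_zero hy hq))).congr_deriv ?_
  field_simp

lemma continuous_D2_left (p : ℝ) : Continuous fun x => D2 x p :=
  (continuous_mul_log_div p).add
    ((continuous_mul_log_div (1 - p)).comp (continuous_const.sub continuous_id))

lemma hasDerivAt_D2_left {p x : ℝ} (hp₀ : p ≠ 0) (hp₁ : 1 - p ≠ 0) (hx₀ : x ≠ 0)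
    (hx₁ : 1 - x ≠ 0) :
    HasDerivAt (fun x => D2 x p) (log (x / p) - log ((1 - x) / (1 - p))) x := by
  have h := (hasDerivAt_mul_log_div hp₁ hx₁).comp x ((hasDerivAt_id' x).const_sub 1)
  exact ((hasDerivAt_mul_log_div hp₀ hx₀).add h).congr_deriv (by ring)

lemma hasDerivAt_log_div_sub_log_div {p x : ℝ} (hp₀ : p ≠ 0) (hp₁ : 1 - p ≠ 0) (hx₀ : x ≠ 0)
    (hx₁ : 1 - x ≠ 0) :
    HasDerivAt (fun x => log (x / p) - log ((1 - x) / (1 - p))) (x * (1 - x))⁻¹ x := by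
  have h₀ := ((hasDerivAt_id' x).div_const p).log (div_ne_zero hx₀ hp₀)
  have h₁ := (((hasDerivAt_id' x).const_sub 1).div_const (1 - p)).log (div_ne_zero hx₁ hp₁)
  refine (h₀.sub h₁).congr_deriv ?_
  field_simp; ring

lemma phi_mul_one_sub_two_mul (p : ℝ) : phi p * (1 - 2 * p) = log ((1 - p) / p) := by
  unfold phi
  split_ifs with h
  · subst h; norm_num
  · have : 1 - 2 * p ≠ 0 := fun h' => h (by linarith)
    field_simp

lemma phi_zero : phi 0 = 0 := by simp [phi]

lemma phi_half : phi (1 / 2) = 2 := if_pos rfl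

lemma two_mul_phi_le_inv {p : ℝ} (hp₀ : 0 < p) (hp : p ≤ 1 / 2) : 2 * phi p ≤ (p * (1 - p))⁻¹ := by
  rcases hp.eq_or_lt with rfl | hp
  · norm_num [phi_half]
  have hu : 1 ≤ (1 - p) / p := by rw [one_le_div hp₀]; linarith
  have hlog := self_le_sinh_iff.2 (log_nonneg hu)
  rw [sinh_log (by linarith), ← phi_mul_one_sub_two_mul] at hlog
  have h2p : 0 < 1 - 2 * p := by linarith
  have hu' : ((1 - p) / p - ((1 - p) / p)⁻¹) / 2 = (p * (1 - p))⁻¹ / 2 * (1 - 2 * p) := by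
    field_simp; ring
  rw [hu'] at hlog
  linarith [le_of_mul_le_mul_right hlog h2p]

noncomputable def hoeffdingGap (p x : ℝ) : ℝ := D2 x p - phi p * (x - p) ^ 2

noncomputable def hoeffdingGapDeriv (p x : ℝ) : ℝ :=
  log (x / p) - log ((1 - x) / (1 - p)) - 2 * phi p * (x - p)

section HoeffdingGap

variable {p x : ℝ}

lemma continuous_hoeffdingGap (p : ℝ) : Continuous (hoeffdingGap p) :=
  (continuous_D2_left p).sub (continuous_const.mul ((continuous_id.sub continuous_const).pow 2))

lemma hasDerivAt_hoeffdingGap (hp₀ : p ≠ 0) (hp₁ : 1 - p ≠ 0) (hx₀ : x ≠ 0) (hx₁ : 1 - x ≠ 0) :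
    HasDerivAt (hoeffdingGap p) (hoeffdingGapDeriv p x) x := by
  have h := ((hasDerivAt_id' x).sub_const p).pow 2 |>.const_mul (phi p)
  refine ((hasDerivAt_D2_left hp₀ hp₁ hx₀ hx₁).sub h).congr_deriv ?_
  rw [hoeffdingGapDeriv]; ring

lemma hasDerivAt_hoeffdingGapDeriv (hp₀ : p ≠ 0) (hp₁ : 1 - p ≠ 0) (hx₀ : x ≠ 0)
    (hx₁ : 1 - x ≠ 0) :
    HasDerivAt (hoeffdingGapDeriv p) ((x * (1 - x))⁻¹ - 2 * phi p) x := by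
  have h := ((hasDerivAt_id' x).sub_const p).const_mul (2 * phi p)
  exact ((hasDerivAt_log_div_sub_log_div hp₀ hp₁ hx₀ hx₁).sub h).congr_deriv (by ring)

lemma hoeffdingGap_self (hp₀ : p ≠ 0) (hp₁ : 1 - p ≠ 0) : hoeffdingGap p p = 0 := by
  simp [hoeffdingGap, D2, hp₀, hp₁]

lemma hoeffdingGapDeriv_self (hp₀ : p ≠ 0) (hp₁ : 1 - p ≠ 0) : hoeffdingGapDeriv p p = 0 := by
  simp [hoeffdingGapDeriv, hp₀, hp₁]

lemma hoeffdingGapDeriv_half (hp₀ : p ≠ 0) (hp₁ : 1 - p ≠ 0) : hoeffdingGapDeriv p (1 / 2) = 0 := by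
  have h := phi_mul_one_sub_two_mul p
  rw [log_div hp₁ hp₀] at h
  rw [hoeffdingGapDeriv, log_div (by norm_num) hp₀, log_div (by norm_num) hp₁,
    show (1 : ℝ) - 1 / 2 = 1 / 2 by norm_num]
  linear_combination -h

lemma hoeffdingGap_one_sub (hp₀ : p ≠ 0) (hp₁ : 1 - p ≠ 0) (hx₀ : x ≠ 0) (hx₁ : 1 - x ≠ 0) :
    hoeffdingGap p (1 - x) = hoeffdingGap p x := by
  have h := phi_mul_one_sub_two_mul p
  rw [log_div hp₁ hp₀] at h
  simp only [hoeffdingGap, D2, sub_sub_cancel]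
  rw [log_div hx₀ hp₀, log_div hx₁ hp₁, log_div hx₁ hp₀, log_div hx₀ hp₁]
  linear_combination (2 * x - 1) * h

lemma hoeffdingGapDeriv_nonneg_of_le_half (hp₀ : 0 < p) (hx : x ∈ Icc p (1 / 2)) :
    0 ≤ hoeffdingGapDeriv p x := by
  have hp : p ≤ 1 / 2 := hx.1.trans hx.2
  have hconc : ConcaveOn ℝ (Icc p (1 / 2)) (hoeffdingGapDeriv p) := by
    refine AntitoneOn.concaveOn_Icc_of_hasDerivAt
      (fun y hy => hasDerivAt_hoeffdingGapDeriv hp₀.ne' (by linarith) (by linarith [hy.1])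
        (by linarith [hy.2])) ?_
    intro y hy z hz hyz
    have : 0 < y * (1 - y) := mul_pos (by linarith [hy.1]) (by linarith [hy.2])
    exact sub_le_sub_right (inv_anti₀ this (by nlinarith [hz.2])) _
  have h := hconc.min_le_of_mem_Icc (left_mem_Icc.2 hp) (right_mem_Icc.2 hp) hx
  rwa [hoeffdingGapDeriv_self hp₀.ne' (by linarith), hoeffdingGapDeriv_half hp₀.ne' (by linarith),
    min_self] at h

lemma hoeffdingGap_nonneg_of_le_half (hp₀ : 0 < p) (hx : x ∈ Icc p (1 / 2)) :
    0 ≤ hoeffdingGap p x := by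
  have hmono : MonotoneOn (hoeffdingGap p) (Icc p (1 / 2)) :=
    monotoneOn_Icc_of_hasDerivAt_nonneg (continuous_hoeffdingGap p).continuousOn
      (fun y hy => hasDerivAt_hoeffdingGap hp₀.ne' (by linarith [hy.1, hy.2]) (by linarith [hy.1])
        (by linarith [hy.2]))
      (fun y hy => hoeffdingGapDeriv_nonneg_of_le_half hp₀ (Ioo_subset_Icc_self hy))
  have h := hmono (left_mem_Icc.2 (hx.1.trans hx.2)) hx hx.1
  rwa [hoeffdingGap_self hp₀.ne' (by linarith [hx.1, hx.2])] at h

lemma hoeffdingGapDeriv_one_sub_self (hp₀ : p ≠ 0) (hp₁ : 1 - p ≠ 0) :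
    hoeffdingGapDeriv p (1 - p) = 0 := by
  have h := phi_mul_one_sub_two_mul p
  rw [log_div hp₁ hp₀] at h
  rw [hoeffdingGapDeriv, sub_sub_cancel, log_div hp₁ hp₀, log_div hp₀ hp₁]
  linear_combination -2 * h

lemma hoeffdingGapDeriv_nonneg_of_one_sub_le (hp₀ : 0 < p) (hp : p ≤ 1 / 2)
    (hx : x ∈ Ico (1 - p) 1) :
    0 ≤ hoeffdingGapDeriv p x := by
  have hderiv : ∀ y ∈ Icc (1 - p) x,
      HasDerivAt (hoeffdingGapDeriv p) ((y * (1 - y))⁻¹ - 2 * phi p) y := fun y hy =>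
    hasDerivAt_hoeffdingGapDeriv hp₀.ne' (by linarith) (by linarith [hy.1])
      (by linarith [hy.2, hx.2])
  have hmono : MonotoneOn (hoeffdingGapDeriv p) (Icc (1 - p) x) := by
    refine monotoneOn_Icc_of_hasDerivAt_nonneg
      (fun y hy => (hderiv y hy).continuousAt.continuousWithinAt)
      (fun y hy => hderiv y (Ioo_subset_Icc_self hy)) fun y hy => ?_
    have : 0 < y * (1 - y) := mul_pos (by linarith [hy.1]) (by linarith [hy.2, hx.2])
    exact sub_nonneg.2 ((two_mul_phi_le_inv hp₀ hp).trans (inv_anti₀ this (by nlinarith [hy.1])))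
  have h := hmono (left_mem_Icc.2 hx.1) (right_mem_Icc.2 hx.1) hx.1
  rwa [hoeffdingGapDeriv_one_sub_self hp₀.ne' (by linarith)] at h

lemma hoeffdingGap_nonneg_of_one_sub_le (hp₀ : 0 < p) (hp : p ≤ 1 / 2) (hx : x ∈ Icc (1 - p) 1) :
    0 ≤ hoeffdingGap p x := by
  have hmono : MonotoneOn (hoeffdingGap p) (Icc (1 - p) 1) :=
    monotoneOn_Icc_of_hasDerivAt_nonneg (continuous_hoeffdingGap p).continuousOn
      (fun y hy => hasDerivAt_hoeffdingGap hp₀.ne' (by linarith) (by linarith [hy.1])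
        (by linarith [hy.2]))
      (fun y hy => hoeffdingGapDeriv_nonneg_of_one_sub_le hp₀ hp (Ioo_subset_Ico_self hy))
  have h := hmono (left_mem_Icc.2 (hx.1.trans hx.2)) hx hx.1
  rwa [hoeffdingGap_one_sub hp₀.ne' (by linarith) hp₀.ne' (by linarith),
    hoeffdingGap_self hp₀.ne' (by linarith)] at h

lemma hoeffdingGap_nonneg (hp₀ : 0 < p) (hp : p ≤ 1 / 2) (hx : x ∈ Icc p 1) :
    0 ≤ hoeffdingGap p x := by
  rcases le_total x (1 / 2) with hx₂ | hx₂
  · exact hoeffdingGap_nonneg_of_le_half hp₀ ⟨hx.1, hx₂⟩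
  rcases le_total x (1 - p) with hx₃ | hx₃
  · rw [← hoeffdingGap_one_sub hp₀.ne' (by linarith) (by linarith) (by linarith)]
    exact hoeffdingGap_nonneg_of_le_half hp₀ ⟨by linarith, by linarith⟩
  · exact hoeffdingGap_nonneg_of_one_sub_le hp₀ hp ⟨hx₃, hx.2⟩

end HoeffdingGap

theorem phi_mul_sq_le_D2 {p x : ℝ} (hp₀ : 0 < p) (hp : p ≤ 1 / 2) (hx : x ∈ Icc p 1) :
    phi p * (x - p) ^ 2 ≤ D2 x p :=
  sub_nonneg.1 (hoeffdingGap_nonneg hp₀ hp hx)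

theorem D2_one_sub_self {p : ℝ} (hp₀ : p ≠ 0) (hp₁ : 1 - p ≠ 0) :
    D2 (1 - p) p = phi p * (1 - 2 * p) ^ 2 := by
  have h := hoeffdingGap_one_sub hp₀ hp₁ hp₀ hp₁
  rw [hoeffdingGap_self hp₀ hp₁, hoeffdingGap, sub_eq_zero] at h
  rw [h]; ring

theorem D2_half_add_le {t : ℝ} (ht₀ : 0 ≤ t) (ht₁ : t ≤ 1 / 4) :
    D2 (1 / 2 + t) (1 / 2) ≤ 2 * t ^ 2 + 16 * t ^ 3 := by
  have hlog₁ := log_one_sub_le (y := -(2 * t))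
    (by rw [abs_neg, abs_of_nonneg (by linarith)]; linarith)
  have hlog₂ := log_one_sub_le (y := 2 * t) (by rw [abs_of_nonneg (by linarith)]; linarith)
  rw [abs_neg, abs_of_nonneg (by linarith)] at hlog₁
  rw [abs_of_nonneg (by linarith)] at hlog₂
  have e₁ : (1 / 2 + t) / (1 / 2) = 1 - -(2 * t) := by ring
  have e₂ : (1 - (1 / 2 + t)) / (1 - 1 / 2) = 1 - 2 * t := by ring
  rw [D2, e₁, e₂]
  nlinarith [mul_le_mul_of_nonneg_left hlog₁ (by linarith : (0 : ℝ) ≤ 1 / 2 + t),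
    mul_le_mul_of_nonneg_left hlog₂ (by linarith : (0 : ℝ) ≤ 1 / 2 - t)]

lemma D2_zero_right_div_sq_le {ε : ℝ} (hε₀ : 0 < ε) (hε₁ : ε < 1) :
    D2 ε 0 / ε ^ 2 ≤ 1 - ε⁻¹ := by
  have hlog : log (1 - ε) ≤ -ε := by linarith [log_le_sub_one_of_pos (by linarith : 0 < 1 - ε)]
  have h : D2 ε 0 = (1 - ε) * log (1 - ε) := by simp [D2]
  rw [h, div_le_iff₀ (by positivity)]
  have : (1 - ε⁻¹) * ε ^ 2 = (1 - ε) * -ε := by field_simp; ring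
  rw [this]
  exact mul_le_mul_of_nonneg_left hlog (by linarith)

lemma not_bddBelow_D2_zero_div_sq :
    ¬BddBelow (range fun ε : Ioc (0 : ℝ) (1 - 0) => D2 (0 + ε.1) 0 / ε.1 ^ 2) := by
  rintro ⟨b, hb⟩
  set ε : ℝ := (|b| + 2)⁻¹
  have hε₀ : 0 < ε := by positivity
  have hε₁ : ε < 1 := inv_lt_one_of_one_lt₀ (by linarith [abs_nonneg b])
  have h := hb ⟨⟨ε, hε₀, by linarith⟩, rfl⟩
  have h' := D2_zero_right_div_sq_le hε₀ hε₁
  simp only [zero_add, ε, inv_inv] at h h'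
  linarith [neg_abs_le b]

lemma phi_le_D2_add_div_sq {p ε : ℝ} (hp₀ : 0 < p) (hp : p ≤ 1 / 2) (hε : ε ∈ Ioc 0 (1 - p)) :
    phi p ≤ D2 (p + ε) p / ε ^ 2 := by
  rw [le_div_iff₀ (pow_pos hε.1 2)]
  simpa using phi_mul_sq_le_D2 hp₀ hp (x := p + ε) ⟨by linarith [hε.1], by linarith [hε.2]⟩

/-- Hoeffding's optimal quadratic bound on binary divergence. -/
theorem stmt10 (p : ℝ) (hp : p ∈ Set.Icc (0 : ℝ) (1 / 2)) :
    (⨅ ε : Set.Ioc (0 : ℝ) (1 - p), D2 (p + ε.1) p / ε.1 ^ 2) = phi p := by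
  obtain ⟨hp₀, hp⟩ := hp
  rcases hp₀.eq_or_lt with rfl | hp₀
  · rw [phi_zero, Real.iInf_of_not_bddBelow not_bddBelow_D2_zero_div_sq]
  have hlow : ∀ ε : Ioc (0 : ℝ) (1 - p), phi p ≤ D2 (p + ε.1) p / ε.1 ^ 2 := fun ε =>
    phi_le_D2_add_div_sq hp₀ hp ε.2
  have hbdd : BddBelow (range fun ε : Ioc (0 : ℝ) (1 - p) => D2 (p + ε.1) p / ε.1 ^ 2) :=
    ⟨phi p, forall_mem_range.2 hlow⟩
  have : Nonempty (Ioc (0 : ℝ) (1 - p)) := ⟨⟨1 - p, by linarith, le_rfl⟩⟩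
  refine le_antisymm ?_ (le_ciInf hlow)
  rcases hp.eq_or_lt with rfl | hp
  · rw [phi_half]
    refine le_of_forall_pos_le_add fun η hη => ?_
    set t := min (1 / 4) (η / 16)
    have ht₀ : 0 < t := lt_min (by norm_num) (by positivity)
    calc _ ≤ D2 (1 / 2 + t) (1 / 2) / t ^ 2 :=
          ciInf_le hbdd ⟨t, ht₀, by linarith [min_le_left (1 / 4) (η / 16)]⟩
      _ ≤ 2 + 16 * t := by
          rw [div_le_iff₀ (by positivity)]
          nlinarith [D2_half_add_le ht₀.le (min_le_left _ _)]
      _ ≤ 2 + η := by linarith [min_le_right (1 / 4) (η / 16)]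
  · have hδ : 0 < 1 - 2 * p := by linarith
    calc _ ≤ D2 (p + (1 - 2 * p)) p / (1 - 2 * p) ^ 2 := ciInf_le hbdd ⟨1 - 2 * p, hδ, by linarith⟩
      _ = phi p := by
          rw [show p + (1 - 2 * p) = 1 - p by ring, D2_one_sub_self hp₀.ne' (by linarith),
            mul_div_cancel_right₀ _ (pow_ne_zero 2 hδ.ne')]
end

section
/- For p ∈ [0, 1/2] and ε ≥ 0 with p + ε ≤ 1, the binary relative entropy satisfies D_2(p + ε ‖ p) ≤ D_2(1 − p + ε ‖ 1 − p) (whenever 1−p+ε ≤ 1, i.e. ε ≤ p). -/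
open Matrix MeasureTheory Filter
open scoped BigOperators ComplexOrder

/-!
Both sides split into perspective terms `x log (x / t)`, and their difference is `g p - g (1 - p)`
with `g t = shiftGap ε t = (t + ε) log ((t + ε) / t) - (t - ε) log ((t - ε) / t)`.
Since `p ≤ 1 - p`, it suffices that `g` is monotone on `[ε, ∞)`: its derivative is
`log ((t + ε) / (t - ε)) - 2ε / t`, which is nonnegative because
`log ((1 + u) / (1 - u)) = 2 artanh u ≥ 2u` for `0 ≤ u < 1`.
-/

open Real

theorem two_mul_le_log_one_add_sub_log_one_sub {u : ℝ} (hu₀ : 0 ≤ u) (hu₁ : u < 1) :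
    2 * u ≤ log (1 + u) - log (1 - u) := by
  have hs := hasSum_log_sub_log_of_abs_lt_one (abs_lt.2 ⟨by linarith, hu₁⟩)
  simpa using le_hasSum hs 0 fun k _ ↦ by positivity

theorem two_mul_div_le_log_add_sub_log_sub {ε t : ℝ} (hε : 0 ≤ ε) (hεt : ε < t) :
    2 * ε / t ≤ log (t + ε) - log (t - ε) := by
  have ht : 0 < t := hε.trans_lt hεt
  have key := two_mul_le_log_one_add_sub_log_one_sub (div_nonneg hε ht.le) ((div_lt_one ht).2 hεt)
  rwa [one_add_div ht.ne', one_sub_div ht.ne', log_div (by linarith) ht.ne',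
    log_div (by linarith) ht.ne', sub_sub_sub_cancel_right, ← mul_div_assoc] at key

theorem mul_log_div_eq {x y : ℝ} (hy : y ≠ 0) : x * log (x / y) = x * log x - x * log y := by
  rcases eq_or_ne x 0 with rfl | hx
  · simp
  · rw [log_div hx hy, mul_sub]

noncomputable def shiftGap (ε t : ℝ) : ℝ :=
  (t + ε) * log ((t + ε) / t) - (t - ε) * log ((t - ε) / t)

theorem D2_sub_D2_one_sub (p ε : ℝ) :
    D2 (p + ε) p - D2 (1 - p + ε) (1 - p) = shiftGap ε p - shiftGap ε (1 - p) := by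
  simp only [D2, shiftGap, sub_sub_cancel, sub_add_eq_sub_sub_swap]
  ring_nf

theorem monotoneOn_shiftGap {ε : ℝ} (hε : 0 ≤ ε) : MonotoneOn (shiftGap ε) (Set.Ici ε) := by
  rcases hε.eq_or_lt with rfl | hε
  · intro s _ t _ _
    simp [shiftGap]
  -- free of division, so that `continuous_mul_log` gives continuity at `t = ε`
  let G : ℝ → ℝ := fun t ↦ (t + ε) * log (t + ε) - (t - ε) * log (t - ε) - 2 * ε * log t
  have hG : Set.EqOn G (shiftGap ε) (Set.Ici ε) := fun t (ht : ε ≤ t) ↦ by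
    have ht0 : t ≠ 0 := (hε.trans_le ht).ne'
    rw [shiftGap, mul_log_div_eq ht0, mul_log_div_eq ht0]
    ring
  have hderiv : ∀ t ∈ Set.Ioi ε,
      HasDerivAt G (log (t + ε) - log (t - ε) - 2 * ε / t) t := fun t (ht : ε < t) ↦ by
    have hadd :=
      (hasDerivAt_mul_log (by linarith : t + ε ≠ 0)).comp t ((hasDerivAt_id t).add_const ε)
    have hsub :=
      (hasDerivAt_mul_log (by linarith : t - ε ≠ 0)).comp t ((hasDerivAt_id t).sub_const ε)
    have hl := (hasDerivAt_log (by linarith : t ≠ 0)).const_mul (2 * ε)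
    refine ((hadd.sub hsub).sub hl).congr_deriv ?_
    rw [div_eq_mul_inv]
    ring
  refine MonotoneOn.congr ?_ hG
  refine monotoneOn_of_deriv_nonneg (convex_Ici ε) ?_ ?_ ?_
  · refine ContinuousOn.sub (by fun_prop) (continuousOn_const.mul ?_)
    exact continuousOn_log.mono fun t (ht : ε ≤ t) ↦ (hε.trans_le ht).ne'
  · rw [interior_Ici]
    exact fun t ht ↦ (hderiv t ht).differentiableAt.differentiableWithinAt
  · rw [interior_Ici]
    intro t ht
    rw [(hderiv t ht).deriv, sub_nonneg]
    exact two_mul_div_le_log_add_sub_log_sub hε.le ht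

/-- monotonicity of binary relative entropy under reflection. -/
theorem stmt11 (p ε : ℝ) (hp : p ∈ Set.Icc (0 : ℝ) (1 / 2)) (hε : 0 ≤ ε) (hεp : ε ≤ p) :
    D2 (p + ε) p ≤ D2 (1 - p + ε) (1 - p) := by
  have hp_le : p ≤ 1 - p := by linarith [hp.2]
  rw [← sub_nonpos, D2_sub_D2_one_sub, sub_nonpos]
  exact monotoneOn_shiftGap hε hεp (hεp.trans hp_le) hp_le
end

section
/- The function φ: [0, 1/2] → R defined by φ(p) = (1/(1−2p)) log((1−p)/p) for p < 1/2 and φ(1/2) = 2 is continuous and strictly decreasing, and satisfies φ(p) ≥ 2 for all p, with φ(p) → +∞ as p → 0. -/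
open Matrix MeasureTheory Filter
open scoped BigOperators ComplexOrder

/-! Substituting `t = 1 - 2p` gives `(1-p)/p = (1+t)/(1-t)`, so `φ(p) = log((1+t)/(1-t)) / t`,
which is the power series `∑ 2 t^(2k) / (2k+1)` of `2 artanh t / t`; its constant term `2` is
exactly the value `φ(1/2)`. All coefficients are positive and the series is even, so on
`0 ≤ t < 1` it is at least `2`, strictly increasing, and continuous by uniform convergence on
compacts. As `p → 0⁺`, `t → 1⁻` and the series dominates
`t · series = log(1+t) - log(1-t) → ∞`. -/

open Set Topology Real

/-- `log ((1 + t) / (1 - t)) / t` on `0 < |t| < 1`, with its removable singularity `2` at `t = 0`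
filled in. -/
noncomputable def atanhQuot (t : ℝ) : ℝ := ∑' k : ℕ, 2 * t ^ (2 * k) / (2 * k + 1)

lemma norm_atanhQuot_term_le {r t : ℝ} (ht : |t| ≤ r) (k : ℕ) :
    ‖2 * t ^ (2 * k) / (2 * k + 1)‖ ≤ 2 * (r ^ 2) ^ k := by
  have hsq : t ^ 2 ≤ r ^ 2 := sq_le_sq' (abs_le.mp ht).1 (abs_le.mp ht).2
  rw [Real.norm_of_nonneg (by have := (even_two_mul k).pow_nonneg t; positivity), pow_mul,
    div_le_iff₀ (by positivity)]
  have : 0 ≤ (t ^ 2) ^ k := by positivity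
  nlinarith [pow_le_pow_left₀ (sq_nonneg t) hsq k, (by positivity : (0 : ℝ) ≤ k)]

lemma hasSum_atanhQuot {t : ℝ} (ht : |t| < 1) :
    HasSum (fun k : ℕ => 2 * t ^ (2 * k) / (2 * k + 1)) (atanhQuot t) := by
  refine Summable.hasSum (Summable.of_norm_bounded (g := fun k => 2 * (|t| ^ 2) ^ k) ?_
    (norm_atanhQuot_term_le le_rfl))
  refine (summable_geometric_of_lt_one (by positivity) ?_).mul_left 2
  nlinarith [abs_nonneg t]

lemma mul_atanhQuot {t : ℝ} (ht : |t| < 1) : t * atanhQuot t = log (1 + t) - log (1 - t) := by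
  have hterm : (fun k : ℕ => t * (2 * t ^ (2 * k) / (2 * k + 1))) =
      fun k : ℕ => 2 * (1 / (2 * k + 1)) * t ^ (2 * k + 1) := by
    funext k
    ring
  have hsum := (hasSum_atanhQuot ht).mul_left t
  rw [hterm] at hsum
  exact hsum.unique (hasSum_log_sub_log_of_abs_lt_one ht)

lemma atanhQuot_zero : atanhQuot 0 = 2 := by
  rw [atanhQuot, tsum_eq_single 0 fun k hk => by simp [hk]]
  norm_num

lemma two_le_atanhQuot {t : ℝ} (ht : |t| < 1) : 2 ≤ atanhQuot t := by
  have := le_hasSum (hasSum_atanhQuot ht) 0 fun k _ => by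
    have := (even_two_mul k).pow_nonneg t
    positivity
  simpa using this

lemma atanhQuot_strictMonoOn : StrictMonoOn atanhQuot (Ico 0 1) := by
  intro s hs t ht hst
  have habs : ∀ {x : ℝ}, x ∈ Ico (0 : ℝ) 1 → |x| < 1 := fun hx => by
    rw [abs_of_nonneg hx.1]
    exact hx.2
  refine hasSum_lt (i := 1) (fun k => ?_) ?_ (hasSum_atanhQuot (habs hs))
    (hasSum_atanhQuot (habs ht))
  · gcongr
    exact hs.1
  · norm_num
    gcongr
    exact hs.1

lemma continuousOn_atanhQuot : ContinuousOn atanhQuot (Ioo (-1) 1) := by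
  intro t ht
  obtain ⟨r, htr, hr⟩ := exists_between (abs_lt.mpr ht)
  have hcont : ContinuousOn atanhQuot (Icc (-r) r) :=
    continuousOn_tsum (fun k => by fun_prop)
      ((summable_geometric_of_lt_one (sq_nonneg r) (by nlinarith [abs_nonneg t])).mul_left 2)
      fun k x hx => norm_atanhQuot_term_le (abs_le.mpr hx) k
  refine (hcont.continuousAt (Icc_mem_nhds ?_ ?_)).continuousWithinAt <;>
    linarith [neg_abs_le t, le_abs_self t]

lemma tendsto_atanhQuot_nhdsLT_one : Tendsto atanhQuot (𝓝[<] 1) atTop := by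
  have hsub : Tendsto (fun t : ℝ => 1 - t) (𝓝[<] 1) (𝓝[>] 0) := by
    have hmaps : MapsTo (fun t : ℝ => 1 - t) (Iio 1) (Ioi 0) := fun t ht =>
      mem_Ioi.mpr (sub_pos.mpr (mem_Iio.mp ht))
    simpa using
      ((continuous_sub_left (1 : ℝ)).continuousWithinAt (x := 1)).tendsto_nhdsWithin hmaps
  refine tendsto_atTop_mono' _ ?_
    (tendsto_neg_atBot_atTop.comp (tendsto_log_nhdsGT_zero.comp hsub))
  filter_upwards [Ioo_mem_nhdsLT (show (0 : ℝ) < 1 by norm_num)] with t ht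
  have ht' : |t| < 1 := by
    rw [abs_of_pos ht.1]
    exact ht.2
  have hlog : 0 ≤ log (1 + t) := log_nonneg (by linarith [ht.1])
  show -log (1 - t) ≤ atanhQuot t
  calc -log (1 - t) ≤ t * atanhQuot t := by
        rw [mul_atanhQuot ht']
        linarith
    _ ≤ atanhQuot t := mul_le_of_le_one_left (by linarith [two_le_atanhQuot ht']) ht.2.le

lemma phi_eq_atanhQuot {p : ℝ} (hp : p ∈ Ioc (0 : ℝ) (1 / 2)) :
    phi p = atanhQuot (1 - 2 * p) := by
  rcases hp.2.eq_or_lt with rfl | hlt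
  · rw [phi, if_pos rfl]
    norm_num [atanhQuot_zero]
  have ht : |1 - 2 * p| < 1 := abs_lt.mpr ⟨by linarith [hp.1], by linarith [hp.1]⟩
  have hne : 1 - 2 * p ≠ 0 := by linarith
  have hlog : log ((1 - p) / p) = log (1 + (1 - 2 * p)) - log (1 - (1 - 2 * p)) := by
    rw [← log_div (by linarith) (by linarith [hp.1])]
    congr 1
    field_simp
    ring
  rw [phi, if_neg hlt.ne, hlog, ← mul_atanhQuot ht, ← mul_assoc, one_div_mul_cancel hne,
    one_mul]

lemma mapsTo_one_sub_two_mul : MapsTo (fun p : ℝ => 1 - 2 * p) (Ioc 0 (1 / 2)) (Ico 0 1) :=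
  fun p hp => ⟨by linarith [hp.2], by linarith [hp.1]⟩

/-- `φ` is continuous, strictly decreasing, at least `2`, and blows up
at `0`. -/
theorem stmt12 :
    ContinuousOn phi (Set.Ioc (0 : ℝ) (1 / 2)) ∧
    StrictAntiOn phi (Set.Ioc (0 : ℝ) (1 / 2)) ∧
    (∀ p ∈ Set.Ioc (0 : ℝ) (1 / 2), 2 ≤ phi p) ∧
    Filter.Tendsto phi (nhdsWithin 0 (Set.Ioi 0)) Filter.atTop := by
  have hIoo : MapsTo (fun p : ℝ => 1 - 2 * p) (Ioc 0 (1 / 2)) (Ioo (-1) 1) :=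
    mapsTo_one_sub_two_mul.mono_right (Ico_subset_Ioo_left (by norm_num))
  refine ⟨?_, ?_, ?_, ?_⟩
  · exact (continuousOn_atanhQuot.comp (by fun_prop) hIoo).congr fun p hp =>
      phi_eq_atanhQuot hp
  · intro p hp q hq hpq
    rw [phi_eq_atanhQuot hp, phi_eq_atanhQuot hq]
    exact atanhQuot_strictMonoOn (mapsTo_one_sub_two_mul hq) (mapsTo_one_sub_two_mul hp)
      (by linarith)
  · intro p hp
    exact phi_eq_atanhQuot hp ▸ two_le_atanhQuot (abs_lt.mpr (hIoo hp))
  · have hlin : Tendsto (fun p : ℝ => 1 - 2 * p) (𝓝[>] 0) (𝓝[<] 1) := by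
      have hmaps : MapsTo (fun p : ℝ => 1 - 2 * p) (Ioi 0) (Iio 1) := fun p hp =>
        mem_Iio.mpr (by linarith [mem_Ioi.mp hp])
      have hcont : Continuous fun p : ℝ => 1 - 2 * p := by fun_prop
      simpa using (hcont.continuousWithinAt (x := 0)).tendsto_nhdsWithin hmaps
    refine (tendsto_atanhQuot_nhdsLT_one.comp hlin).congr' ?_
    filter_upwards [Ioc_mem_nhdsGT (show (0 : ℝ) < 1 / 2 by norm_num)] with p hp
    exact (phi_eq_atanhQuot hp).symm
end
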